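/- arXiv:2304.12753 — 6 statements merged into one kernel-verified Lean document; each statement's English description precedes it below -/
import Mathlib

section
/- Let G be a finite group, p a prime, P a Sylow p-subgroup of G, and let d be a power of p with 1 < d < |P|. If every subgroup of P of order d satisfies the partial Π-property in G, then every minimal normal subgroup of G is either a p'-group or a p-group of order at most d. -/
section PartialPiDefs

variable {G : Type*} [Group G]

/-- A chief series of a group `G`: a strictly increasing series of normal subgroups of `G`
running from `⊥` to `⊤` such that there is no normal subgroup of `G` strictly between two
consecutive terms. -/
structure IsChiefSeries {n : ℕ} (σ : Fin (n + 1) → Subgroup G) : Prop where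
  bot : σ 0 = ⊥
  top : σ (Fin.last n) = ⊤
  mono : StrictMono σ
  normal : ∀ i, (σ i).Normal
  chief : ∀ (i : Fin n) (N : Subgroup G), N.Normal →
    σ i.castSucc ≤ N → N ≤ σ i.succ → N = σ i.castSucc ∨ N = σ i.succ

/-- `L/K` is a chief factor of `G`: both are normal in `G`, `K < L`, and there is no
normal subgroup of `G` strictly between `K` and `L`. -/
structure IsChiefFactor (K L : Subgroup G) : Prop where
  normK : K.Normal
  normL : L.Normal
  lt : K < L
  chief : ∀ N : Subgroup G, N.Normal → K ≤ N → N ≤ L → N = K ∨ N = L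

/-- `H` satisfies the partial Π-property in `G`: there is a chief series
`1 = G_0 < G_1 < ⋯ < G_n = G` such that for each `i`, the index
`|G/G_{i-1} : N_{G/G_{i-1}}(H G_{i-1}/G_{i-1} ∩ G_i/G_{i-1})|` is a
`π(H G_{i-1}/G_{i-1} ∩ G_i/G_{i-1})`-number, i.e. every prime dividing this index divides
the order of `H G_{i-1}/G_{i-1} ∩ G_i/G_{i-1}`. -/
def SatisfiesPartialPi (H : Subgroup G) : Prop :=
  ∃ (n : ℕ) (σ : Fin (n + 1) → Subgroup G) (hσ : IsChiefSeries σ),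
    ∀ i : Fin n,
      haveI : (σ i.castSucc).Normal := hσ.normal _
      ∀ q : ℕ, q.Prime →
        q ∣ (Subgroup.normalizer ((H.map (QuotientGroup.mk' (σ i.castSucc)) ⊓
              (σ i.succ).map (QuotientGroup.mk' (σ i.castSucc)) : Subgroup (G ⧸ σ i.castSucc)) :
                Set (G ⧸ σ i.castSucc))).index →
        q ∣ Nat.card ↥(H.map (QuotientGroup.mk' (σ i.castSucc)) ⊓
              (σ i.succ).map (QuotientGroup.mk' (σ i.castSucc)))

/-- A (finite) group `G` is `p`-soluble if every chief factor of `G` is either a `p`-group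
or a `p'`-group. -/
def IsPSoluble (p : ℕ) (G : Type*) [Group G] : Prop :=
  ∀ K L : Subgroup G, IsChiefFactor K L →
    (∃ k : ℕ, K.relIndex L = p ^ k) ∨ ¬ p ∣ K.relIndex L

/-- A (finite) group `G` is `p`-supersoluble if every chief factor of `G` is either a
`p'`-group or cyclic of order `p`. -/
def IsPSupersoluble (p : ℕ) (G : Type*) [Group G] : Prop :=
  ∀ K L : Subgroup G, IsChiefFactor K L →
    (¬ p ∣ K.relIndex L) ∨ K.relIndex L = p

/-- A (finite, `p`-soluble) group has `p`-length at most `1` iff it has a normal series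
`1 ≤ A ≤ B ≤ G` where `A` and `G/B` are `p'`-groups and `B/A` is a `p`-group; equivalently,
the upper `p`-series `1 ≤ O_{p'}(G) ≤ O_{p'p}(G) ≤ O_{p'pp'}(G) = G` has at most one
nontrivial `p`-factor. -/
def HasPLengthLEOne (p : ℕ) (G : Type*) [Group G] : Prop :=
  ∃ A B : Subgroup G, A.Normal ∧ B.Normal ∧ A ≤ B ∧
    (¬ p ∣ Nat.card A) ∧ (∃ k : ℕ, A.relIndex B = p ^ k) ∧ (¬ p ∣ B.index)

/-- A `2`-group is quaternion-free if it has no section (quotient of a subgroup) isomorphic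
to the quaternion group `Q₈` of order `8`. -/
def QuaternionFree (P : Type*) [Group P] : Prop :=
  ∀ (H : Subgroup P) (N : Subgroup H) (hN : N.Normal),
    haveI := hN
    IsEmpty ((H ⧸ N) ≃* QuaternionGroup 2)

end PartialPiDefs

section Hypercenters

variable {G : Type*} [Group G]

/-- The chief factor `L/K` of `G` is `U_p`-central in `G` if the semidirect product
`(L/K) ⋊ (G/C_G(L/K))` (with the conjugation action) is `p`-supersoluble.  Here `L/K` is
realized as the image of `L` in `G/K`, and `G/C_G(L/K)` as the quotient of `G/K` by the
kernel of the conjugation action on `L/K`. -/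
def UpCentralFactor (p : ℕ) (K L : Subgroup G) (hK : K.Normal) (hL : L.Normal) : Prop :=
  haveI := hK
  letI A : Subgroup (G ⧸ K) := L.map (QuotientGroup.mk' K)
  haveI hA : A.Normal := hL.map _ (QuotientGroup.mk'_surjective K)
  letI φ : G ⧸ K →* MulAut ↥A := MulAut.conjNormal
  IsPSupersoluble p (↥A ⋊[QuotientGroup.kerLift φ] ((G ⧸ K) ⧸ φ.ker))

/-- `Z_{U_p}(G)`, the `U_p`-hypercenter of `G`: the largest normal subgroup of `G` all of
whose `G`-chief factors below it are `U_p`-central in `G`. -/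
def UpHypercenter (p : ℕ) (G : Type*) [Group G] : Subgroup G :=
  sSup {N : Subgroup G | N.Normal ∧ ∀ K L : Subgroup G, ∀ h : IsChiefFactor K L, L ≤ N →
    UpCentralFactor p K L h.normK h.normL}

/-- `Z_U(G)`, the supersoluble hypercenter of `G`: the largest normal subgroup of `G` all of
whose `G`-chief factors below it are cyclic. -/
def UHypercenter (G : Type*) [Group G] : Subgroup G :=
  sSup {N : Subgroup G | N.Normal ∧ ∀ K L : Subgroup G, ∀ h : IsChiefFactor K L, L ≤ N →
    haveI := h.normK.subgroupOf L
    IsCyclic (↥L ⧸ K.subgroupOf L)}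

end Hypercenters

section CoresSocle

variable {G : Type*} [Group G]

lemma sSup_normal {S : Set (Subgroup G)} (h : ∀ H ∈ S, H.Normal) : (sSup S).Normal := by
  constructor
  intro x hx g
  have hle : sSup S ≤ Subgroup.comap ((MulAut.conj g).toMonoidHom) (sSup S) := by
    refine sSup_le fun H hH y hy => ?_
    refine Subgroup.mem_comap.mpr ?_
    have hc : g * y * g⁻¹ ∈ H := (h H hH).conj_mem y hy g
    simpa using (le_sSup hH : H ≤ sSup S) hc
  simpa using hle hx

lemma normal_inf' {H K : Subgroup G} (h1 : H.Normal) (h2 : K.Normal) : (H ⊓ K).Normal :=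
  ⟨fun n hn g => ⟨h1.conj_mem n hn.1 g, h2.conj_mem n hn.2 g⟩⟩

/-- `O_p(G)`: the largest normal `p`-subgroup of `G`. -/
def pCore (p : ℕ) (G : Type*) [Group G] : Subgroup G :=
  sSup {H : Subgroup G | H.Normal ∧ IsPGroup p H}

/-- `N` is a minimal normal subgroup of `G`. -/
def IsMinimalNormal (N : Subgroup G) : Prop :=
  N.Normal ∧ N ≠ ⊥ ∧ ∀ K : Subgroup G, K.Normal → K ≤ N → K = ⊥ ∨ K = N

/-- `Soc(G)`: the socle of `G`, the subgroup generated by all minimal normal subgroups. -/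
def socle (G : Type*) [Group G] : Subgroup G :=
  sSup {N : Subgroup G | IsMinimalNormal N}

lemma socle_normal (G : Type*) [Group G] : (socle G).Normal :=
  sSup_normal fun _ hH => hH.1

end CoresSocle

section Omega

/-- `Ω_i(P)`: the subgroup generated by all elements `x` of `P` with `x ^ (p ^ i) = 1`. -/
def omega (p i : ℕ) (P : Type*) [Group P] : Subgroup P :=
  Subgroup.closure {x : P | x ^ p ^ i = 1}

/-- `Ω(P)` is `Ω_1(P)` if `P` has odd order or is a quaternion-free `2`-group, and `Ω_2(P)`
otherwise. -/
noncomputable def bigOmega (p : ℕ) (P : Type*) [Group P] : Subgroup P :=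
  letI := Classical.propDecidable (Odd (Nat.card P) ∨ QuaternionFree P)
  if Odd (Nat.card P) ∨ QuaternionFree P then omega p 1 P else omega p 2 P

/-- A Thompson critical subgroup of a `p`-group `P`: a characteristic subgroup `D` with
`Φ(D) ≤ Z(D)`, `[P, D] ≤ Z(D)` and `C_P(D) = Z(D)`  (here `Z(D) = D ⊓ C_P(D)`). -/
def IsThompsonCritical {P : Type*} [Group P] (D : Subgroup P) : Prop :=
  D.Characteristic ∧
  (frattini D).map D.subtype ≤ D ⊓ Subgroup.centralizer (D : Set P) ∧
  ⁅(⊤ : Subgroup P), D⁆ ≤ D ⊓ Subgroup.centralizer (D : Set P) ∧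
  Subgroup.centralizer (D : Set P) ≤ D

end Omega


section AuxLemmas

open Subgroup


lemma aux_pow_of_primes {n p : ℕ} (hp : p.Prime) (hn : n ≠ 0)
    (h : ∀ q : ℕ, q.Prime → q ∣ n → q = p) : ∃ a, n = p ^ a :=
  ⟨_, Nat.eq_prime_pow_of_unique_prime_dvd hn (fun hq hdvd => h _ hq hdvd)⟩

lemma aux_crossing {n : ℕ} (Q : Fin (n + 1) → Prop) (h0 : ¬ Q 0) (hl : Q (Fin.last n)) :
    ∃ i : Fin n, ¬ Q i.castSucc ∧ Q i.succ := by
  by_contra hc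
  push_neg at hc
  have key : ∀ j : ℕ, ∀ hj : j < n + 1, ¬ Q ⟨j, hj⟩ := by
    intro j
    induction j with
    | zero => intro hj; exact h0
    | succ k ih =>
      intro hj
      have hkn : k < n := Nat.lt_of_succ_lt_succ hj
      have h1 : ¬ Q (Fin.castSucc ⟨k, hkn⟩) := by
        have : Fin.castSucc ⟨k, hkn⟩ = ⟨k, Nat.lt_of_succ_lt hj⟩ := by
          ext; simp
        rw [this]; exact ih _
      have h2 := hc ⟨k, hkn⟩ h1
      have : Fin.succ ⟨k, hkn⟩ = ⟨k + 1, hj⟩ := by ext; simp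
      rwa [this] at h2
  have : Fin.last n = ⟨n, Nat.lt_succ_self n⟩ := rfl
  exact key n (Nat.lt_succ_self n) (this ▸ hl)

lemma aux_card_map_of_disjoint {G H : Type*} [Group G] [Group H] (f : G →* H) (X : Subgroup G)
    (hdisj : X ⊓ f.ker = ⊥) : Nat.card (X.map f) = Nat.card X := by
  have hinj : Function.Injective (f.comp X.subtype) := by
    rw [← MonoidHom.ker_eq_bot_iff]
    ext x
    simp only [MonoidHom.mem_ker, MonoidHom.comp_apply, Subgroup.coe_subtype, Subgroup.mem_bot]
    constructor
    · intro hfx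
      have : (x : G) ∈ X ⊓ f.ker := ⟨x.2, hfx⟩
      rw [hdisj] at this
      exact Subtype.ext (by simpa using this)
    · rintro rfl; simp
  have hrange : (f.comp X.subtype).range = X.map f := by
    rw [MonoidHom.range_comp, Subgroup.range_subtype]
  rw [← hrange]
  exact (Nat.card_congr (MonoidHom.ofInjective hinj).toEquiv).symm


lemma aux_central_order_p {P : Type*} [Group P] [Finite P] {p : ℕ} (hp : p.Prime)
    (hP : IsPGroup p P) (N : Subgroup P) [hNn : N.Normal] (hNbot : N ≠ ⊥) :
    ∃ x : P, x ∈ N ∧ x ∈ Subgroup.center P ∧ orderOf x = p := by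
  haveI : Fact p.Prime := ⟨hp⟩
  have hconj : IsPGroup p (ConjAct P) := hP.of_equiv ConjAct.toConjAct
  have hNp : IsPGroup p ↥N := hP.to_subgroup N
  have hcard_dvd : ∀ (M : Subgroup P), M ≠ ⊥ → p ∣ Nat.card ↥M := by
    intro M hM
    obtain ⟨r, hr⟩ := (hP.to_subgroup M).exists_card_eq
    have hr1 : 1 ≤ r := by
      rcases Nat.eq_zero_or_pos r with h0 | h; swap; · exact h
      exfalso
      rw [h0, pow_zero] at hr
      exact hM ((Subgroup.card_eq_one).mp hr)
    rw [hr]; exact dvd_pow_self p (by omega)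
  obtain ⟨b, hbfix, hbne⟩ := hconj.exists_fixed_point_of_prime_dvd_card_of_fixed_point (α := ↥N)
    (hcard_dvd N hNbot) (a := (1 : ↥N)) (fun g => by simp)
  have hbcen : (b : P) ∈ Subgroup.center P := by
    rw [Subgroup.mem_center_iff]
    intro g
    have h1 := hbfix (ConjAct.toConjAct g)
    have hval := congrArg (Subtype.val) h1
    rw [ConjAct.Subgroup.val_conj_smul, ConjAct.smul_def, ConjAct.ofConjAct_toConjAct] at hval
    rw [mul_inv_eq_iff_eq_mul] at hval
    exact hval
  set Z := N ⊓ Subgroup.center P with hZdef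
  have hZbot : Z ≠ ⊥ := by
    intro hcon
    have : (b : P) ∈ Z := ⟨b.2, hbcen⟩
    rw [hcon, Subgroup.mem_bot] at this
    exact hbne (Subtype.ext (by simp [this])).symm
  obtain ⟨x, hx⟩ := exists_prime_orderOf_dvd_card' (G := ↥Z) p (hcard_dvd Z hZbot)
  exact ⟨(x : P), x.2.1, x.2.2, by rw [Subgroup.orderOf_coe]; exact hx⟩

lemma aux_exists_normal_subgroup {P : Type*} [Group P] [Finite P] {p : ℕ} (hp : p.Prime)
    (hP : IsPGroup p P) (N : Subgroup P) (hNnorm : N.Normal) :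
    ∀ k : ℕ, p ^ k ∣ Nat.card N → ∃ H : Subgroup P, H ≤ N ∧ H.Normal ∧ Nat.card H = p ^ k := by
  intro k
  induction k with
  | zero =>
    intro _
    exact ⟨⊥, bot_le, inferInstance, by simp⟩
  | succ k ih =>
    intro hdvd
    obtain ⟨H, hHN, hHnorm, hHcard⟩ := ih (dvd_trans (pow_dvd_pow p (Nat.le_succ k)) hdvd)
    haveI := hHnorm
    set π := QuotientGroup.mk' H with hπdef
    set N' := N.map π with hN'def
    haveI hN'norm : N'.Normal := hNnorm.map π (QuotientGroup.mk'_surjective H)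
    have hq : IsPGroup p (P ⧸ H) := hP.to_quotient H
    have hN'bot : N' ≠ ⊥ := by
      intro hcon
      have hle : N ≤ H := by
        intro x hx
        have : π x ∈ N' := Subgroup.mem_map_of_mem π hx
        rw [hcon, Subgroup.mem_bot] at this
        rwa [← QuotientGroup.ker_mk' H, MonoidHom.mem_ker]
      have : N = H := le_antisymm hle hHN
      rw [this, hHcard] at hdvd
      have := Nat.le_of_dvd (pow_pos hp.pos k) hdvd
      exact absurd this (by
        have := Nat.pow_lt_pow_succ hp.one_lt (n := k)
        omega)
    obtain ⟨x, hxN', hxcen, hxord⟩ := aux_central_order_p hp hq N' hN'bot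
    set Z := Subgroup.zpowers x with hZdef
    have hZnorm : Z.Normal := by
      constructor
      intro n hn g
      have : g * n * g⁻¹ = n := by
        have := (Subgroup.mem_center_iff.mp hxcen)
        have hcomm : ∀ m ∈ Z, ∀ w : P ⧸ H, w * m = m * w := by
          intro m hm w
          obtain ⟨j, rfl⟩ := Subgroup.mem_zpowers_iff.mp hm
          have hx' : x ∈ Subgroup.center (P ⧸ H) := hxcen
          have : x ^ j ∈ Subgroup.center (P ⧸ H) := Subgroup.zpow_mem _ hx' j
          exact (Subgroup.mem_center_iff.mp this w).symm ▸ (Subgroup.mem_center_iff.mp this w)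
        rw [hcomm n hn g, mul_assoc, mul_inv_cancel, mul_one]
      rwa [this]
    refine ⟨Z.comap π, ?_, hZnorm.comap π, ?_⟩
    · have hZN' : Z ≤ N' := by
        rw [hZdef]
        exact (Subgroup.zpowers_le).mpr hxN'
      calc Z.comap π ≤ N'.comap π := Subgroup.comap_mono hZN'
        _ = N ⊔ H := by rw [hN'def, Subgroup.comap_map_eq, QuotientGroup.ker_mk']
        _ = N := sup_eq_left.mpr hHN
    · -- cardinality
      have hset : ((Z.comap π : Subgroup P) : Set P) = QuotientGroup.mk ⁻¹' (Z : Set (P ⧸ H)) := rfl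
      have hcard : Nat.card ↥(Z.comap π) = Nat.card (↥H × ↥(Z : Set (P ⧸ H))) := by
        rw [← SetLike.coe_sort_coe, hset]
        exact Nat.card_congr (QuotientGroup.preimageMkEquivSubgroupProdSet H (Z : Set (P ⧸ H)))
      rw [hcard, Nat.card_prod, hHcard, SetLike.coe_sort_coe]
      have : Nat.card ↥Z = p := by rw [hZdef, Nat.card_zpowers, hxord]
      rw [this, pow_succ]

lemma aux_normalClosure_isPGroup {G : Type*} [Group G] [Finite G] {p : ℕ} (hp : p.Prime)
    (T : Subgroup G) (hT : IsPGroup p ↥T)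
    (hidx : ∃ a, (Subgroup.normalizer (T : Set G)).index = p ^ a) :
    IsPGroup p ↥(Subgroup.normalClosure (T : Set G)) := by
  haveI : Fact p.Prime := ⟨hp⟩
  set M := Subgroup.normalizer (T : Set G) with hMdef
  have hT' : IsPGroup p ↥(T.subgroupOf M) :=
    hT.of_equiv (Subgroup.subgroupOfEquivOfLe Subgroup.le_normalizer).symm
  obtain ⟨S₁, hS₁⟩ := hT'.exists_le_sylow
  set S₁' := (S₁ : Subgroup ↥M).map M.subtype with hS₁'def
  have hS₁'p : IsPGroup p ↥S₁' := S₁.2.map _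
  obtain ⟨S, hS⟩ := hS₁'p.exists_le_sylow
  have hTS : T ≤ (S : Subgroup G) := by
    intro x hx
    have h1 : (⟨x, Subgroup.le_normalizer hx⟩ : ↥M) ∈ (S₁ : Subgroup ↥M) :=
      hS₁ (Subgroup.mem_subgroupOf.mpr hx)
    exact hS ⟨_, h1, rfl⟩
  have hS₁'M : S₁' ≤ M := Subgroup.map_subtype_le _
  have hSM : (S : Subgroup G) ⊓ M = S₁' := by
    apply le_antisymm
    · have hsub : ((S : Subgroup G) ⊓ M).subgroupOf M = (S₁ : Subgroup ↥M) := by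
        refine S₁.3 ?_ ?_
        · exact (S.2.to_le inf_le_left).of_equiv (Subgroup.subgroupOfEquivOfLe inf_le_right).symm
        · intro y hy
          exact Subgroup.mem_subgroupOf.mpr ⟨hS ⟨y, hy, rfl⟩, y.2⟩
      intro x hx
      have : (⟨x, hx.2⟩ : ↥M) ∈ ((S : Subgroup G) ⊓ M).subgroupOf M :=
        Subgroup.mem_subgroupOf.mpr hx
      rw [hsub] at this
      exact ⟨_, this, rfl⟩
    · exact le_inf (le_trans (le_of_eq rfl) hS) hS₁'M
  -- cardinalities
  obtain ⟨a, ha⟩ := hidx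
  have hcardS : Nat.card ↥S = p ^ (Nat.card G).factorization p := S.card_eq_multiplicity
  have hcardS₁ : Nat.card ↥(S₁ : Subgroup ↥M) = p ^ (Nat.card ↥M).factorization p :=
    S₁.card_eq_multiplicity
  have hcardS₁' : Nat.card ↥S₁' = Nat.card ↥(S₁ : Subgroup ↥M) :=
    Nat.card_congr ((S₁ : Subgroup ↥M).equivMapOfInjective M.subtype
      M.subtype_injective).toEquiv.symm
  have hGM : Nat.card ↥M * p ^ a = Nat.card G := by
    rw [← ha]; exact Subgroup.card_mul_index M
  have hMpos : (Nat.card ↥M) ≠ 0 := Nat.card_pos.ne'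
  have hfact : (Nat.card G).factorization p = (Nat.card ↥M).factorization p + a := by
    rw [← hGM, Nat.factorization_mul hMpos (pow_ne_zero a hp.pos.ne'), Finsupp.add_apply,
      hp.factorization_pow, Finsupp.single_eq_same]
  -- the orbit of the trivial coset under M is everything
  classical
  let α := G ⧸ (S : Subgroup G)
  haveI : Fintype G := Fintype.ofFinite G
  haveI : Fintype α := Fintype.ofFinite α
  haveI : Fintype ↥M := Fintype.ofFinite _
  have hstab : MulAction.stabilizer ↥M ((1 : G) : α) = (S : Subgroup G).subgroupOf M := by
    ext m
    rw [MulAction.mem_stabilizer_iff, Subgroup.mem_subgroupOf]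
    show ((m : G) • ((1 : G) : α)) = ((1 : G) : α) ↔ (m : G) ∈ (S : Subgroup G)
    rw [MulAction.Quotient.smul_mk, smul_eq_mul, mul_one, QuotientGroup.eq]
    simp
  have hcardstab : Nat.card ↥(MulAction.stabilizer ↥M ((1 : G) : α)) =
      p ^ (Nat.card ↥M).factorization p := by
    rw [hstab, ← Subgroup.inf_subgroupOf_right, hSM, ← hcardS₁, ← hcardS₁']
    exact Nat.card_congr (Subgroup.subgroupOfEquivOfLe hS₁'M).toEquiv
  have horbstab := MulAction.card_orbit_mul_card_stabilizer_eq_card_group ↥M ((1 : G) : α)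
  -- convert to Nat.card
  have horbstab' : Nat.card ↥(MulAction.orbit ↥M ((1 : G) : α)) *
      p ^ (Nat.card ↥M).factorization p = Nat.card ↥M := by
    rw [← hcardstab]
    simpa [Nat.card_eq_fintype_card] using horbstab
  have hcardα : Nat.card α * p ^ ((Nat.card ↥M).factorization p + a) = Nat.card G := by
    rw [← hfact, ← hcardS]
    have := Subgroup.index_mul_card (S : Subgroup G)
    rw [← this]; rfl
  have horbcard : Nat.card ↥(MulAction.orbit ↥M ((1 : G) : α)) = Nat.card α := by
    have h1 : Nat.card ↥(MulAction.orbit ↥M ((1 : G) : α)) *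
        p ^ ((Nat.card ↥M).factorization p + a) = Nat.card G := by
      rw [pow_add, ← mul_assoc, horbstab', hGM]
    have := h1.trans hcardα.symm
    exact Nat.eq_of_mul_eq_mul_right (pow_pos hp.pos _) this
  have horb : MulAction.orbit ↥M ((1 : G) : α) = Set.univ := by
    apply Set.eq_of_subset_of_ncard_le (Set.subset_univ _)
    · rw [Set.ncard_univ, ← horbcard, Nat.card_coe_set_eq]
  -- decomposition G = S * M ... rather every g⁻¹ ∈ M * S
  have hdecomp : ∀ g : G, ∃ s ∈ (S : Subgroup G), ∃ m ∈ M, g = s * m := by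
    intro g
    have : ((g⁻¹ : G) : α) ∈ MulAction.orbit ↥M ((1 : G) : α) := by rw [horb]; trivial
    obtain ⟨m, hm⟩ := this
    have : ((m : G) • ((1 : G) : α)) = ((g⁻¹ : G) : α) := hm
    rw [MulAction.Quotient.smul_mk, smul_eq_mul, mul_one] at this
    have := QuotientGroup.eq.mp this
    -- (m:G)⁻¹ * g⁻¹ ∈ S
    refine ⟨((m : G)⁻¹ * g⁻¹)⁻¹, inv_mem this, (m : G)⁻¹, inv_mem m.2, ?_⟩
    group
  have hNCle : Subgroup.normalClosure (T : Set G) ≤ (S : Subgroup G) := by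
    rw [Subgroup.normalClosure]
    rw [Subgroup.closure_le]
    intro c hc
    obtain ⟨t, ht, htc⟩ := Group.mem_conjugatesOfSet_iff.mp hc
    obtain ⟨g, hg⟩ := isConj_iff.mp htc
    obtain ⟨s, hs, m, hm, rfl⟩ := hdecomp g
    have h1 : m * t * m⁻¹ ∈ T := (Subgroup.mem_normalizer_iff.mp hm t).mp ht
    have h2 : s * (m * t * m⁻¹) * s⁻¹ ∈ (S : Subgroup G) :=
      Subgroup.mul_mem _ (Subgroup.mul_mem _ hs (hTS h1)) (inv_mem hs)
    have heq : s * m * t * (s * m)⁻¹ = s * (m * t * m⁻¹) * s⁻¹ := by group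
    rw [← hg, heq]
    exact h2
  exact S.2.to_le hNCle

lemma aux_find_factor {G : Type*} [Group G] {n : ℕ} {σ : Fin (n + 1) → Subgroup G}
    (hσ : IsChiefSeries σ) {N : Subgroup G} (hN : IsMinimalNormal N) :
    ∃ i : Fin n, ¬ N ≤ σ i.castSucc ∧ N ≤ σ i.succ ∧
      N ⊓ σ i.castSucc = ⊥ ∧ N ⊔ σ i.castSucc = σ i.succ := by
  obtain ⟨i, hni, hsi⟩ := aux_crossing (fun j => N ≤ σ j)
    (by intro hc; rw [hσ.bot] at hc; exact hN.2.1 (le_bot_iff.mp hc))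
    (by show N ≤ σ (Fin.last n); rw [hσ.top]; exact le_top)
  have hKnorm := hσ.normal i.castSucc
  have hKL : σ i.castSucc ≤ σ i.succ := (hσ.mono (Fin.castSucc_lt_succ (i := i))).le
  have hinf : N ⊓ σ i.castSucc = ⊥ := by
    rcases hN.2.2 (N ⊓ σ i.castSucc) (normal_inf' hN.1 hKnorm) inf_le_left with h | h
    · exact h
    · exact absurd (inf_eq_left.mp h) hni
  have hsup : N ⊔ σ i.castSucc = σ i.succ := by
    haveI := hN.1
    haveI := hKnorm
    rcases hσ.chief i (N ⊔ σ i.castSucc) inferInstance le_sup_right (sup_le hsi hKL) with h | h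
    · exact absurd (le_trans le_sup_left h.le) hni
    · exact h
  exact ⟨i, hni, hsi, hinf, hsup⟩

end AuxLemmas

/-- If every subgroup of order `d` of a Sylow `p`-subgroup `P` of `G` satisfies
the partial Π-property in `G`, then every minimal normal subgroup of `G` is either a
`p'`-group or a `p`-group of order at most `d`. -/
theorem thm_minimal_normal_order
    {G : Type*} [Group G] [Finite G] {p : ℕ} (hp : p.Prime)
    (P : Sylow p G) (d : ℕ) (hd : ∃ k : ℕ, d = p ^ k)
    (hd1 : 1 < d) (hd2 : d < Nat.card ↥(P : Subgroup G))
    (h : ∀ H : Subgroup G, H ≤ (P : Subgroup G) → Nat.card ↥H = d → SatisfiesPartialPi H)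
    (N : Subgroup G) (hN : IsMinimalNormal N) :
    ¬ p ∣ Nat.card ↥N ∨ (IsPGroup p ↥N ∧ Nat.card ↥N ≤ d) := by
  haveI : Fact p.Prime := ⟨hp⟩
  by_cases hdvd : p ∣ Nat.card ↥N
  swap
  · exact Or.inl hdvd
  obtain ⟨k, hdk⟩ := hd
  have hk1 : 1 ≤ k := by
    rcases Nat.eq_zero_or_pos k with h0 | h1
    · rw [h0, pow_zero] at hdk; omega
    · exact h1
  -- an element y of order p in P ⊓ N
  obtain ⟨x, hx⟩ := exists_prime_orderOf_dvd_card' (G := ↥N) p hdvd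
  have hxG : orderOf (x : G) = p := by rw [Subgroup.orderOf_coe]; exact hx
  have hzp : IsPGroup p ↥(Subgroup.zpowers (x : G)) := by
    apply IsPGroup.of_card
    rw [Nat.card_zpowers, hxG, pow_one]
  obtain ⟨Q, hQ⟩ := hzp.exists_le_sylow
  obtain ⟨g, hg⟩ := MulAction.exists_smul_eq G Q P
  set y := g * (x : G) * g⁻¹ with hydef
  have hyP : y ∈ (P : Subgroup G) := by
    rw [← hg, Sylow.coe_subgroup_smul]
    have := Subgroup.smul_mem_pointwise_smul (x : G) (MulAut.conj g) (Q : Subgroup G)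
      (hQ (Subgroup.mem_zpowers _))
    simpa [MulAut.smul_def] using this
  have hyN : y ∈ N := hN.1.conj_mem _ x.2 g
  have hyord : orderOf y = p := by
    rw [hydef, ← hxG]
    have hsc : SemiconjBy g (x : G) (g * (x : G) * g⁻¹) := by
      unfold SemiconjBy; group
    exact (hsc.orderOf_eq).symm
  have hyne : y ≠ 1 := by
    intro hcon
    rw [hcon, orderOf_one] at hyord
    exact hp.one_lt.ne hyord
  -- Part 1 : N is a p-group
  have hPart1 : IsPGroup p ↥N := by
    -- a subgroup H ≤ P of order d containing y
    obtain ⟨m, hm⟩ := P.2.exists_card_eq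
    have hkm : p ^ k ∣ Nat.card ↥(P : Subgroup G) := by
      rw [hm]
      apply pow_dvd_pow
      have hlt' : p ^ k < p ^ m := by rw [← hdk, ← hm]; exact hd2
      exact le_of_lt ((Nat.pow_lt_pow_iff_right hp.one_lt).mp hlt')
    set x₀ : ↥(P : Subgroup G) := ⟨y, hyP⟩ with hx₀def
    have hx₀ord : orderOf x₀ = p := by rw [Subgroup.orderOf_mk]; exact hyord
    have hT₀card : Nat.card ↥(Subgroup.zpowers x₀) = p ^ 1 := by
      rw [Nat.card_zpowers, hx₀ord, pow_one]
    obtain ⟨K₀, hK₀card, hK₀le⟩ :=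
      Sylow.exists_subgroup_card_pow_prime_le p hkm (Subgroup.zpowers x₀) hT₀card hk1
    set H := K₀.map (P : Subgroup G).subtype with hHdef
    have hHP : H ≤ (P : Subgroup G) := Subgroup.map_subtype_le _
    have hHcard : Nat.card ↥H = d := by
      rw [hHdef, hdk, ← hK₀card]
      exact (Nat.card_congr (K₀.equivMapOfInjective _
        (P : Subgroup G).subtype_injective).toEquiv).symm
    have hyH : y ∈ H := ⟨x₀, hK₀le (Subgroup.mem_zpowers x₀), rfl⟩
    -- apply the partial Π property
    obtain ⟨nn, σ, hσ, hcond⟩ := h H hHP hHcard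
    obtain ⟨i, hni, hsi, hinf, hsup⟩ := aux_find_factor hσ hN
    haveI hKn := hσ.normal i.castSucc
    set π := QuotientGroup.mk' (σ i.castSucc) with hπdef
    set T := H.map π ⊓ (σ i.succ).map π with hTdef
    have hHp : IsPGroup p ↥H := IsPGroup.of_card (by rw [hHcard, hdk])
    have hTp : IsPGroup p ↥T := (hHp.map π).to_le inf_le_left
    have hidx : ∃ a, (Subgroup.normalizer (T : Set (G ⧸ σ i.castSucc))).index = p ^ a := by
      obtain ⟨m', hm'⟩ := hTp.exists_card_eq
      apply aux_pow_of_primes hp Subgroup.index_ne_zero_of_finite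
      intro q hq hqdvd
      have hq2 := hcond i q hq hqdvd
      rw [← hπdef, ← hTdef, hm'] at hq2
      exact (Nat.prime_dvd_prime_iff_eq hq hp).mp (hq.dvd_of_dvd_pow hq2)
    have hyK : y ∉ σ i.castSucc := by
      intro hcon
      have hmem : y ∈ N ⊓ σ i.castSucc := ⟨hyN, hcon⟩
      rw [hinf] at hmem
      exact hyne hmem
    have hyT : π y ∈ T := ⟨⟨y, hyH, rfl⟩, ⟨y, hsi hyN, rfl⟩⟩
    have hNCp := aux_normalClosure_isPGroup hp T hTp hidx
    set R := (Subgroup.normalClosure (T : Set (G ⧸ σ i.castSucc))).comap π with hRdef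
    have hRnorm : R.Normal := Subgroup.normalClosure_normal.comap π
    have hKR : σ i.castSucc ≤ R := by
      intro z hz
      show π z ∈ Subgroup.normalClosure (T : Set (G ⧸ σ i.castSucc))
      have hz1 : π z = 1 := by
        rw [← MonoidHom.mem_ker, QuotientGroup.ker_mk']; exact hz
      rw [hz1]
      exact Subgroup.one_mem _
    have hKL : σ i.castSucc ≤ σ i.succ := (hσ.mono (Fin.castSucc_lt_succ (i := i))).le
    have hRL : R ≤ σ i.succ := by
      haveI : ((σ i.succ).map π).Normal :=
        (hσ.normal i.succ).map π (QuotientGroup.mk'_surjective _)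
      have h1 : Subgroup.normalClosure (T : Set (G ⧸ σ i.castSucc)) ≤ (σ i.succ).map π :=
        Subgroup.normalClosure_le_normal (SetLike.coe_subset_coe.mpr inf_le_right)
      calc R ≤ ((σ i.succ).map π).comap π := Subgroup.comap_mono h1
        _ = σ i.succ ⊔ σ i.castSucc := by
            rw [Subgroup.comap_map_eq, QuotientGroup.ker_mk']
        _ = σ i.succ := sup_eq_left.mpr hKL
    have hyR : y ∈ R := Subgroup.subset_normalClosure hyT
    have hReq : R = σ i.succ := by
      rcases hσ.chief i R hRnorm hKR hRL with h' | h'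
      · exact absurd (h' ▸ hyR) hyK
      · exact h'
    have hmapL : (σ i.succ).map π = Subgroup.normalClosure (T : Set (G ⧸ σ i.castSucc)) := by
      rw [← hReq, hRdef, Subgroup.map_comap_eq_self_of_surjective
        (QuotientGroup.mk'_surjective _)]
    intro z
    have hz1 : π (z : G) ∈ (σ i.succ).map π := ⟨z, hsi z.2, rfl⟩
    rw [hmapL] at hz1
    obtain ⟨j, hj⟩ := hNCp ⟨π (z : G), hz1⟩
    have hj' : (π (z : G)) ^ p ^ j = 1 := by
      have := congrArg Subtype.val hj
      simpa using this
    have hz2 : (z : G) ^ p ^ j ∈ σ i.castSucc := by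
      rw [← map_pow] at hj'
      rwa [← QuotientGroup.ker_mk' (σ i.castSucc), MonoidHom.mem_ker]
    have hz3 : (z : G) ^ p ^ j ∈ N ⊓ σ i.castSucc := ⟨N.pow_mem z.2 _, hz2⟩
    rw [hinf] at hz3
    exact ⟨j, Subtype.ext (by simpa using hz3)⟩
  refine Or.inr ⟨hPart1, ?_⟩
  by_contra hlt
  push_neg at hlt
  -- N ≤ P
  obtain ⟨Q₂, hNQ₂⟩ := hPart1.exists_le_sylow
  obtain ⟨g₂, hg₂⟩ := MulAction.exists_smul_eq G Q₂ P
  have hNP : N ≤ (P : Subgroup G) := by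
    intro z hz
    rw [← hg₂, Sylow.coe_subgroup_smul,
      Subgroup.mem_pointwise_smul_iff_inv_smul_mem]
    have h1 : g₂⁻¹ * z * g₂ ∈ N := by
      have := hN.1.conj_mem z hz g₂⁻¹
      simpa using this
    have h2 : g₂⁻¹ * z * g₂ ∈ (Q₂ : Subgroup G) := hNQ₂ h1
    simpa [MulAut.smul_def] using h2
  -- a subgroup H ≤ N of order d, normalized by P
  set N₁ := N.subgroupOf (P : Subgroup G) with hN₁def
  haveI hN₁norm : N₁.Normal := hN.1.subgroupOf _
  have hN₁card : Nat.card ↥N₁ = Nat.card ↥N :=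
    Nat.card_congr (Subgroup.subgroupOfEquivOfLe hNP).toEquiv
  obtain ⟨r, hrN⟩ := hPart1.exists_card_eq
  have hdvd' : p ^ k ∣ Nat.card ↥N₁ := by
    rw [hN₁card, hrN]
    apply pow_dvd_pow
    have hlt' : p ^ k < p ^ r := by rw [← hdk, ← hrN]; exact hlt
    exact le_of_lt ((Nat.pow_lt_pow_iff_right hp.one_lt).mp hlt')
  obtain ⟨H₁, hH₁N₁, hH₁norm, hH₁card⟩ := aux_exists_normal_subgroup hp P.2 N₁ hN₁norm k hdvd'
  set H := H₁.map (P : Subgroup G).subtype with hHdef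
  have hHP : H ≤ (P : Subgroup G) := Subgroup.map_subtype_le _
  have hHN : H ≤ N := by
    calc H ≤ N₁.map (P : Subgroup G).subtype := Subgroup.map_mono hH₁N₁
      _ = N ⊓ (P : Subgroup G) := Subgroup.subgroupOf_map_subtype _ _
      _ ≤ N := inf_le_left
  have hHcard : Nat.card ↥H = d := by
    rw [hHdef, hdk, ← hH₁card]
    exact (Nat.card_congr (H₁.equivMapOfInjective _
      (P : Subgroup G).subtype_injective).toEquiv).symm
  have hPnormH : ∀ g ∈ (P : Subgroup G), ∀ w ∈ H, g * w * g⁻¹ ∈ H := by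
    intro g hg w hw
    obtain ⟨w₁, hw₁, rfl⟩ := hw
    have h1 := hH₁norm.conj_mem w₁ hw₁ ⟨g, hg⟩
    exact ⟨_, h1, rfl⟩
  obtain ⟨nn, σ, hσ, hcond⟩ := h H hHP hHcard
  obtain ⟨i, hni, hsi, hinf, hsup⟩ := aux_find_factor hσ hN
  haveI hKn := hσ.normal i.castSucc
  set π := QuotientGroup.mk' (σ i.castSucc) with hπdef
  set T := H.map π ⊓ (σ i.succ).map π with hTdef
  have hHL : H ≤ σ i.succ := le_trans hHN hsi
  have hTeq : T = H.map π := inf_eq_left.mpr (Subgroup.map_mono hHL)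
  have hHker : H ⊓ π.ker = ⊥ := by
    rw [hπdef, QuotientGroup.ker_mk']
    exact eq_bot_iff.mpr (le_trans (inf_le_inf_right _ hHN) hinf.le)
  have hTcard : Nat.card ↥T = d := by
    rw [hTeq, aux_card_map_of_disjoint _ _ hHker, hHcard]
  have hidx : ∃ a, (Subgroup.normalizer (T : Set (G ⧸ σ i.castSucc))).index = p ^ a := by
    apply aux_pow_of_primes hp Subgroup.index_ne_zero_of_finite
    intro q hq hqdvd
    have hq2 := hcond i q hq hqdvd
    rw [← hπdef, ← hTdef, hTcard, hdk] at hq2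
    exact (Nat.prime_dvd_prime_iff_eq hq hp).mp (hq.dvd_of_dvd_pow hq2)
  have hPmap : (P : Subgroup G).map π ≤ (Subgroup.normalizer (T : Set (G ⧸ σ i.castSucc))) := by
    rintro ξ ⟨g, hg, rfl⟩
    rw [Subgroup.mem_normalizer_iff]
    intro b
    rw [hTeq]
    constructor
    · rintro ⟨w, hw, rfl⟩
      exact ⟨g * w * g⁻¹, hPnormH g hg w hw, by simp [map_mul]⟩
    · rintro ⟨w, hw, hweq⟩
      have hb : b = π (g⁻¹ * w * g) := by
        have h5 := congrArg (fun t => (π g)⁻¹ * (t * (π g))) hweq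
        simp only [map_mul, map_inv] at h5 ⊢
        group at h5 ⊢
        rw [← h5]
      rw [hb]
      refine ⟨g⁻¹ * w * g, ?_, rfl⟩
      have h6 := hPnormH g⁻¹ (inv_mem hg) w hw
      simpa using h6
  have hPidx : ¬ p ∣ ((P : Subgroup G).map π).index := by
    intro hcon
    have hdvd2 : ((P : Subgroup G).map π).index ∣ (P : Subgroup G).index :=
      Subgroup.index_map_dvd _ (QuotientGroup.mk'_surjective _)
    exact P.not_dvd_index (hcon.trans hdvd2)
  obtain ⟨a, hTidx⟩ := hidx
  have hdvd3 : (Subgroup.normalizer (T : Set (G ⧸ σ i.castSucc))).index ∣ ((P : Subgroup G).map π).index :=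
    Subgroup.index_dvd_of_le hPmap
  have ha0 : a = 0 := by
    by_contra h0
    apply hPidx
    calc p ∣ p ^ a := dvd_pow_self p h0
      _ = (Subgroup.normalizer (T : Set (G ⧸ σ i.castSucc))).index := hTidx.symm
      _ ∣ _ := hdvd3
  have hTnorm : T.Normal := by
    rw [← Subgroup.normalizer_eq_top_iff, ← Subgroup.index_eq_one, hTidx, ha0, pow_zero]
  set R := T.comap π with hRdef
  have hRnorm : R.Normal := hTnorm.comap π
  have hKR : σ i.castSucc ≤ R := by
    intro z hz
    show π z ∈ T
    have hz1 : π z = 1 := by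
      rw [← MonoidHom.mem_ker, QuotientGroup.ker_mk']; exact hz
    rw [hz1]
    exact Subgroup.one_mem _
  have hKL : σ i.castSucc ≤ σ i.succ := (hσ.mono (Fin.castSucc_lt_succ (i := i))).le
  have hRL : R ≤ σ i.succ := by
    calc R ≤ ((σ i.succ).map π).comap π := Subgroup.comap_mono inf_le_right
      _ = σ i.succ ⊔ σ i.castSucc := by rw [Subgroup.comap_map_eq, QuotientGroup.ker_mk']
      _ = σ i.succ := sup_eq_left.mpr hKL
  have hmapR : T = R.map π :=
    (Subgroup.map_comap_eq_self_of_surjective (QuotientGroup.mk'_surjective _) T).symm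
  rcases hσ.chief i R hRnorm hKR hRL with h' | h'
  · have hTbot : T = ⊥ := by
      rw [hmapR, h', Subgroup.map_eq_bot_iff, hπdef, QuotientGroup.ker_mk']
    rw [hTbot] at hTcard
    simp at hTcard
    omega
  · have h2 : T = (σ i.succ).map π := by rw [hmapR, h']
    have h3 : (σ i.succ).map π = N.map π := by
      rw [← hsup, Subgroup.map_sup]
      have hbot : (σ i.castSucc).map π = ⊥ := by
        rw [Subgroup.map_eq_bot_iff, hπdef, QuotientGroup.ker_mk']
      rw [hbot, sup_bot_eq]
    have hNker : N ⊓ π.ker = ⊥ := by rw [hπdef, QuotientGroup.ker_mk']; exact hinf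
    have h4 : Nat.card ↥(N.map π) = Nat.card ↥N := aux_card_map_of_disjoint _ _ hNker
    rw [h2, h3, h4] at hTcard
    omega
end

section
/- Let G be a finite group, p a prime, P a Sylow p-subgroup of G, and let d be a power of p with 1 < d < |P|. Assume that every subgroup of P of order d satisfies the partial Π-property in G. If G has a minimal normal subgroup of order d, then every minimal normal subgroup of G that is a p-group has order d. -/
section AuxProof

open scoped Pointwise

variable {G : Type*} {G' : Type*} [Group G] [Group G']

lemma aux_card_map_mul (f : G →* G') (A : Subgroup G) :
    Nat.card (A.map f) * Nat.card ((f.ker).subgroupOf A) = Nat.card A := by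
  have h3 : (f.subgroupMap A).ker = (f.ker).subgroupOf A := by
    ext x
    simp only [MonoidHom.mem_ker, Subgroup.mem_subgroupOf]
    constructor
    · intro hx
      have := congrArg (Subtype.val) hx
      simpa using this
    · intro hx
      exact Subtype.ext (by simpa using hx)
  have h1 := Subgroup.card_eq_card_quotient_mul_card_subgroup (f.subgroupMap A).ker
  have h2 : Nat.card (↥A ⧸ (f.subgroupMap A).ker) = Nat.card (A.map f) :=
    Nat.card_congr (QuotientGroup.quotientKerEquivOfSurjective _
      (f.subgroupMap_surjective A)).toEquiv
  rw [h2, h3] at h1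
  exact h1.symm

lemma aux_card_map_of_disjoint_s6 (f : G →* G') {A : Subgroup G} (h : A ⊓ f.ker = ⊥) :
    Nat.card (A.map f) = Nat.card A := by
  have h3 : (f.ker).subgroupOf A = ⊥ :=
    Subgroup.subgroupOf_eq_bot.mpr (by rw [disjoint_iff, inf_comm]; exact h)
  have h4 := aux_card_map_mul f A
  rwa [h3, Subgroup.card_bot, mul_one] at h4

lemma aux_card_map_dvd (f : G →* G') (A : Subgroup G) : Nat.card (A.map f) ∣ Nat.card A :=
  ⟨_, (aux_card_map_mul f A).symm⟩

lemma aux_map_conj_eq {g : G} {X : Subgroup G} (hg : g ∈ Subgroup.normalizer (X : Set G)) :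
    X.map (MulAut.conj g).toMonoidHom = X := by
  ext x
  simp only [Subgroup.mem_map, MulEquiv.coe_toMonoidHom, MulAut.conj_apply]
  constructor
  · rintro ⟨y, hy, rfl⟩
    exact (Subgroup.mem_normalizer_iff.mp hg y).mp hy
  · intro hx
    refine ⟨g⁻¹ * x * g, ?_, by group⟩
    have h2 := (Subgroup.mem_normalizer_iff.mp ((Subgroup.normalizer (X : Set G)).inv_mem hg) x).mp hx
    simpa [mul_assoc] using h2

lemma aux_mem_normalizer_of_map_conj {g : G} {X : Subgroup G}
    (h : X.map (MulAut.conj g).toMonoidHom = X) : g ∈ Subgroup.normalizer (X : Set G) := by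
  rw [Subgroup.mem_normalizer_iff]
  intro x
  constructor
  · intro hx
    have h9 : g * x * g⁻¹ ∈ X.map (MulAut.conj g).toMonoidHom := ⟨x, hx, rfl⟩
    rwa [h] at h9
  · intro hx
    rw [← h] at hx
    obtain ⟨y, hy, hyx⟩ := hx
    simp only [MulEquiv.coe_toMonoidHom, MulAut.conj_apply] at hyx
    have hxy : y = x := mul_left_cancel (mul_right_cancel hyx)
    rwa [← hxy]

lemma aux_le_normalizer_inf {Q X Y : Subgroup G} (h1 : Q ≤ Subgroup.normalizer (X : Set G))
    (h2 : Q ≤ Subgroup.normalizer (Y : Set G)) : Q ≤ Subgroup.normalizer ((X ⊓ Y : Subgroup G) : Set G) := by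
  intro g hg
  apply aux_mem_normalizer_of_map_conj
  rw [Subgroup.map_inf _ _ _ (MulAut.conj g).injective, aux_map_conj_eq (h1 hg),
    aux_map_conj_eq (h2 hg)]

lemma aux_le_normalizer_sup {Q X Y : Subgroup G} (h1 : Q ≤ Subgroup.normalizer (X : Set G))
    (h2 : Q ≤ Subgroup.normalizer (Y : Set G)) : Q ≤ Subgroup.normalizer ((X ⊔ Y : Subgroup G) : Set G) := by
  intro g hg
  apply aux_mem_normalizer_of_map_conj
  rw [Subgroup.map_sup, aux_map_conj_eq (h1 hg), aux_map_conj_eq (h2 hg)]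

lemma aux_normal_le_sylow [Finite G] {p : ℕ} [Fact p.Prime] {N : Subgroup G}
    (hN : N.Normal) (hNp : IsPGroup p N) (P : Sylow p G) : N ≤ (P : Subgroup G) := by
  obtain ⟨Q, hQ⟩ := hNp.exists_le_sylow
  obtain ⟨g, hg⟩ := MulAction.exists_smul_eq G Q P
  intro x hx
  have hP : (P : Subgroup G) = MulAut.conj g • (Q : Subgroup G) := by
    rw [← hg, Sylow.smul_def, Sylow.pointwise_smul_def]
  rw [hP, Subgroup.mem_pointwise_smul_iff_inv_smul_mem]
  have hconj : (MulAut.conj g)⁻¹ • x = g⁻¹ * x * g := by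
    rw [← map_inv, MulAut.smul_def, MulAut.conj_apply, inv_inv]
  rw [hconj]
  have hx' : g⁻¹ * x * g ∈ N := by
    have := hN.conj_mem x hx g⁻¹
    rwa [inv_inv] at this
  exact hQ hx'

lemma aux_exists_center {Q : Type*} [Group Q] [Finite Q] {p : ℕ} [Fact p.Prime]
    (hQ : IsPGroup p Q) {M : Subgroup Q} (hM : M.Normal) (hpM : p ∣ Nat.card M) :
    ∃ z : Q, z ∈ M ⊓ Subgroup.center Q ∧ z ≠ 1 := by
  have hC : IsPGroup p (ConjAct Q) := hQ.of_equiv ConjAct.toConjAct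
  have h1 : (1 : M) ∈ MulAction.fixedPoints (ConjAct Q) M := fun g => smul_one g
  obtain ⟨b, hb, hb1⟩ := hC.exists_fixed_point_of_prime_dvd_card_of_fixed_point M hpM h1
  refine ⟨(b : Q), ⟨b.2, Subgroup.mem_center_iff.mpr fun g => ?_⟩, fun hb0 => hb1 ?_⟩
  · have h2 := congrArg Subtype.val (hb (ConjAct.toConjAct g))
    rw [ConjAct.Subgroup.val_conj_smul, ConjAct.smul_def, ConjAct.ofConjAct_toConjAct] at h2
    calc g * (b : Q) = g * (b : Q) * g⁻¹ * g := by group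
    _ = (b : Q) * g := by rw [h2]
  · exact (Subtype.ext hb0).symm

lemma aux_exists_normal_of_dvd {P : Type*} [Group P] [Finite P] {p : ℕ} [Fact p.Prime]
    (hP : IsPGroup p P) (M : Subgroup P) (hM : M.Normal) :
    ∀ a : ℕ, p ^ a ∣ Nat.card M →
      ∃ S : Subgroup P, S.Normal ∧ S ≤ M ∧ Nat.card S = p ^ a := by
  intro a
  induction a with
  | zero =>
    intro _
    exact ⟨⊥, inferInstance, bot_le, by rw [Subgroup.card_bot, pow_zero]⟩
  | succ a ih =>
    intro hdvd
    obtain ⟨S, hSn, hSM, hScard⟩ := ih ((pow_dvd_pow p (Nat.le_succ a)).trans hdvd)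
    haveI := hSn
    set π := QuotientGroup.mk' S with hπ
    have hsur : Function.Surjective π := QuotientGroup.mk'_surjective S
    have hker : π.ker = S := QuotientGroup.ker_mk' S
    set M' := M.map π with hM'def
    haveI hM'n : M'.Normal := hM.map π hsur
    have hcards : Nat.card M' * Nat.card (π.ker.subgroupOf M) = Nat.card M :=
      aux_card_map_mul π M
    have hkcard : Nat.card (π.ker.subgroupOf M) = p ^ a := by
      rw [hker, ← hScard]
      exact Nat.card_congr (Subgroup.subgroupOfEquivOfLe hSM).toEquiv
    have hpM' : p ∣ Nat.card M' := by
      have hc' : Nat.card M' * p ^ a = Nat.card M := by rw [← hkcard]; exact hcards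
      have hd2 : p ^ a * p ∣ p ^ a * Nat.card M' := by
        rw [mul_comm (p ^ a) (Nat.card ↥M'), hc', ← pow_succ]
        exact hdvd
      exact (mul_dvd_mul_iff_left
        (pow_ne_zero a (Fact.out (p := p.Prime)).pos.ne')).mp hd2
    have hQp : IsPGroup p (P ⧸ S) := hP.to_quotient S
    obtain ⟨z, hz, hz1⟩ := aux_exists_center hQp hM'n hpM'
    set W := M' ⊓ Subgroup.center (P ⧸ S) with hW
    have hWp : IsPGroup p W := hQp.to_subgroup W
    have hpW : p ∣ Nat.card W := by
      obtain ⟨t, ht⟩ := IsPGroup.iff_card.mp hWp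
      rcases Nat.eq_zero_or_pos t with ht0 | ht0
      · exfalso
        rw [ht0, pow_zero] at ht
        haveI : Subsingleton ↥W := (Nat.card_eq_one_iff_unique.mp ht).1
        exact hz1 (congrArg Subtype.val (Subsingleton.elim (⟨z, hz⟩ : W) 1))
      · rw [ht]
        exact dvd_pow_self p ht0.ne'
    haveI := Fintype.ofFinite ↥W
    obtain ⟨x, hx⟩ := exists_prime_orderOf_dvd_card (G := ↥W) p
      (by rwa [← Nat.card_eq_fintype_card])
    set zz := ((x : W) : P ⧸ S) with hzz
    have hozz : orderOf zz = p := by rw [Subgroup.orderOf_coe]; exact hx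
    set Z := Subgroup.zpowers zz with hZ
    have hZcard : Nat.card Z = p := by rw [Nat.card_zpowers, hozz]
    have hZM' : Z ≤ M' := Subgroup.zpowers_le.mpr x.2.1
    have hZc : Z ≤ Subgroup.center (P ⧸ S) := Subgroup.zpowers_le.mpr x.2.2
    have hZn : Z.Normal := by
      constructor
      intro nn hnn g
      have hgz : g * nn = nn * g := Subgroup.mem_center_iff.mp (hZc hnn) g
      have h9 : g * nn * g⁻¹ = nn := by rw [hgz]; group
      rw [h9]
      exact hnn
    refine ⟨Z.comap π, hZn.comap π, ?_, ?_⟩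
    · have h5 : Z.comap π ≤ M'.comap π := Subgroup.comap_mono hZM'
      rwa [hM'def, Subgroup.comap_map_eq, hker, sup_of_le_left hSM] at h5
    · have hSle : S ≤ Z.comap π := by
        intro s hs
        have h10 : π s = 1 := by rw [← MonoidHom.mem_ker, hker]; exact hs
        exact Subgroup.mem_comap.mpr (by rw [h10]; exact Z.one_mem)
      have h6 : Nat.card ((Z.comap π).map π) * Nat.card (π.ker.subgroupOf (Z.comap π))
          = Nat.card (Z.comap π) := aux_card_map_mul π _
      rw [Subgroup.map_comap_eq_self_of_surjective hsur, hZcard] at h6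
      have h7 : Nat.card (π.ker.subgroupOf (Z.comap π)) = p ^ a := by
        rw [hker, ← hScard]
        exact Nat.card_congr (Subgroup.subgroupOfEquivOfLe hSle).toEquiv
      rw [h7] at h6
      rw [← h6, pow_succ']

lemma aux_normal_of_index [Finite G] {p : ℕ} (hp : p.Prime) {Q X : Subgroup G}
    (hQ : ¬ p ∣ Q.index) (hXQ : Q ≤ Subgroup.normalizer (X : Set G)) {a : ℕ} (hX : Nat.card X = p ^ a)
    (hprime : ∀ q : ℕ, q.Prime → q ∣ (Subgroup.normalizer (X : Set G)).index → q ∣ Nat.card X) : X.Normal := by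
  rw [← Subgroup.normalizer_eq_top_iff]
  rw [← Subgroup.index_eq_one]
  by_contra hne
  obtain ⟨q, hq, hqd⟩ := Nat.exists_prime_and_dvd hne
  have h1 := hprime q hq hqd
  rw [hX] at h1
  have hqp : q = p := (Nat.prime_dvd_prime_iff_eq hq hp).mp (hq.dvd_of_dvd_pow h1)
  subst hqp
  exact hQ (hqd.trans (Subgroup.index_dvd_of_le hXQ))

lemma aux_quot_min {A B : Subgroup G} [hA : A.Normal] (hAB : A ≤ B)
    (hchief : ∀ N : Subgroup G, N.Normal → A ≤ N → N ≤ B → N = A ∨ N = B)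
    {Y : Subgroup (G ⧸ A)} (hY : Y.Normal)
    (hle : Y ≤ B.map (QuotientGroup.mk' A)) :
    Y = ⊥ ∨ Y = B.map (QuotientGroup.mk' A) := by
  set π := QuotientGroup.mk' A with hπ
  have hsur : Function.Surjective π := QuotientGroup.mk'_surjective A
  have hker : π.ker = A := QuotientGroup.ker_mk' A
  have hZ : (Y.comap π).Normal := hY.comap π
  have hZB : Y.comap π ≤ B := by
    have h1 := Subgroup.comap_mono (f := π) hle
    rwa [Subgroup.comap_map_eq, hker, sup_of_le_left hAB] at h1
  have hAZ : A ≤ Y.comap π := by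
    intro a' ha'
    have h10 : π a' = 1 := by rw [← MonoidHom.mem_ker, hker]; exact ha'
    exact Subgroup.mem_comap.mpr (by rw [h10]; exact Y.one_mem)
  have hmc : (Y.comap π).map π = Y := Subgroup.map_comap_eq_self_of_surjective hsur Y
  rcases hchief _ hZ hAZ hZB with h | h
  · left
    rw [← hmc, h]
    exact QuotientGroup.map_mk'_self A
  · right
    rw [← hmc, h]

lemma aux_eq_of_le_of_card_le [Finite G] {X Y : Subgroup G} (h : X ≤ Y)
    (hc : Nat.card Y ≤ Nat.card X) : X = Y := by
  have h1 : Nat.card (X.subgroupOf Y) = Nat.card X :=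
    Nat.card_congr (Subgroup.subgroupOfEquivOfLe h).toEquiv
  have h2 : X.subgroupOf Y = ⊤ := Subgroup.eq_top_of_le_card _ (by rw [h1]; exact hc)
  exact le_antisymm h (Subgroup.subgroupOf_eq_top.mp h2)

lemma aux_crux [Finite G] {p : ℕ} [Fact p.Prime] (P : Sylow p G)
    {H : Subgroup G} (hHnorm : (P : Subgroup G) ≤ Subgroup.normalizer (H : Set G))
    {n : ℕ} {σ : Fin (n + 1) → Subgroup G} (hσ : IsChiefSeries σ)
    (hpi : ∀ i : Fin n,
      haveI : (σ i.castSucc).Normal := hσ.normal _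
      ∀ q : ℕ, q.Prime →
        q ∣ (Subgroup.normalizer ((H.map (QuotientGroup.mk' (σ i.castSucc)) ⊓
              (σ i.succ).map (QuotientGroup.mk' (σ i.castSucc)) : Subgroup (G ⧸ σ i.castSucc)) : Set (G ⧸ σ i.castSucc))).index →
        q ∣ Nat.card ↥(H.map (QuotientGroup.mk' (σ i.castSucc)) ⊓
              (σ i.succ).map (QuotientGroup.mk' (σ i.castSucc))))
    {M : Subgroup G} (hM : IsMinimalNormal M) (hMp : IsPGroup p ↥M) :
    ∃ i : Fin n,
      haveI : (σ i.castSucc).Normal := hσ.normal _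
      M ⊓ σ i.castSucc = ⊥ ∧ M ≤ σ i.succ ∧
      (σ i.succ).map (QuotientGroup.mk' (σ i.castSucc)) =
        M.map (QuotientGroup.mk' (σ i.castSucc)) ∧
      (H.map (QuotientGroup.mk' (σ i.castSucc)) ⊓
          (σ i.succ).map (QuotientGroup.mk' (σ i.castSucc)) ≠ ⊥ →
        H.map (QuotientGroup.mk' (σ i.castSucc)) ⊓
          (σ i.succ).map (QuotientGroup.mk' (σ i.castSucc)) =
          M.map (QuotientGroup.mk' (σ i.castSucc))) := by
  classical
  obtain ⟨hMnorm, hMne, hMmin⟩ := hM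
  have hex2 : ∃ t : ℕ, ∃ ht : t + 1 < n + 1, M ≤ σ ⟨t + 1, ht⟩ := by
    rcases n with _ | n'
    · exfalso
      apply hMne
      have h0 : M ≤ σ (Fin.last 0) := hσ.top ▸ le_top
      rw [show (Fin.last 0) = 0 from rfl, hσ.bot] at h0
      exact le_bot_iff.mp h0
    · refine ⟨n', Nat.lt_succ_self _, ?_⟩
      have h0 : M ≤ σ (Fin.last (n' + 1)) := hσ.top ▸ le_top
      exact h0
  let t := Nat.find hex2
  obtain ⟨htn, hMB⟩ : ∃ ht : t + 1 < n + 1, M ≤ σ ⟨t + 1, ht⟩ := Nat.find_spec hex2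
  refine ⟨⟨t, Nat.lt_of_succ_lt_succ htn⟩, ?_⟩
  set i : Fin n := ⟨t, Nat.lt_of_succ_lt_succ htn⟩ with hi
  haveI hAn : (σ i.castSucc).Normal := hσ.normal _
  haveI hBn : (σ i.succ).Normal := hσ.normal _
  haveI hMn' := hMnorm
  set π := QuotientGroup.mk' (σ i.castSucc) with hπ
  have hsur : Function.Surjective π := QuotientGroup.mk'_surjective _
  have hker : π.ker = σ i.castSucc := QuotientGroup.ker_mk' _
  have hisucc : i.succ = (⟨t + 1, htn⟩ : Fin (n + 1)) := rfl
  have hMB' : M ≤ σ i.succ := by rw [hisucc]; exact hMB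
  have hMA : ¬ M ≤ σ i.castSucc := by
    rcases ht0 : t with _ | s
    · have hcast : i.castSucc = (0 : Fin (n + 1)) := by
        apply Fin.ext
        simp [hi, ht0]
      rw [hcast, hσ.bot]
      intro hle
      exact hMne (le_bot_iff.mp hle)
    · intro hle
      have hcast : i.castSucc = (⟨s + 1, by omega⟩ : Fin (n + 1)) := by
        apply Fin.ext
        simp [hi, ht0]
      rw [hcast] at hle
      exact Nat.find_min hex2 (by omega : s < t) ⟨by omega, hle⟩
  have hMinf : M ⊓ σ i.castSucc = ⊥ := by
    rcases hMmin (M ⊓ σ i.castSucc) (normal_inf' hMnorm hAn) inf_le_left with h | h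
    · exact h
    · exact absurd (h ▸ inf_le_right) hMA
  have hAB : σ i.castSucc ≤ σ i.succ := le_of_lt (hσ.mono (Fin.castSucc_lt_succ (i := i)))
  have hsup : M ⊔ σ i.castSucc = σ i.succ := by
    haveI : (M ⊔ σ i.castSucc).Normal := Subgroup.sup_normal M (σ i.castSucc)
    rcases hσ.chief i (M ⊔ σ i.castSucc) this le_sup_right (sup_le hMB' hAB) with h | h
    · exact absurd (le_sup_left.trans h.le) hMA
    · exact h
  have hBmap : (σ i.succ).map π = M.map π := by
    rw [← hsup, Subgroup.map_sup]
    have : (σ i.castSucc).map π = ⊥ := QuotientGroup.map_mk'_self _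
    rw [this, sup_bot_eq]
  refine ⟨hMinf, hMB', hBmap, ?_⟩
  intro hne
  set X := H.map π ⊓ (σ i.succ).map π with hX
  have hPind : ¬ p ∣ ((P : Subgroup G).map π).index := by
    intro hdvd
    exact P.not_dvd_index (hdvd.trans (Subgroup.index_map_dvd _ hsur))
  have hXQ : (P : Subgroup G).map π ≤ Subgroup.normalizer (X : Set (G ⧸ σ i.castSucc)) := by
    apply aux_le_normalizer_inf
    · exact (Subgroup.map_mono hHnorm).trans (Subgroup.le_normalizer_map π)
    · have hn' : ((σ i.succ).map π).Normal := hBn.map π hsur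
      rw [Subgroup.normalizer_eq_top_iff.mpr hn']
      exact le_top
  have hXM : X ≤ M.map π := hBmap ▸ inf_le_right
  obtain ⟨m, hm⟩ := IsPGroup.iff_card.mp hMp
  have hXdvd : Nat.card X ∣ p ^ m := by
    calc Nat.card X ∣ Nat.card (M.map π) := Subgroup.card_dvd_of_le hXM
    _ ∣ Nat.card M := aux_card_map_dvd π M
    _ = p ^ m := hm
  obtain ⟨a, _, ha⟩ := (Nat.dvd_prime_pow (Fact.out (p := p.Prime))).mp hXdvd
  have hXn : X.Normal :=
    aux_normal_of_index (Fact.out (p := p.Prime)) hPind hXQ ha (hpi i)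
  rcases aux_quot_min hAB (hσ.chief i) hXn inf_le_right with h | h
  · exact absurd h hne
  · rw [h, hBmap]

end AuxProof

/-- Assume every subgroup of order `d` of a Sylow `p`-subgroup `P` of `G`
satisfies the partial Π-property in `G`. If `G` has a minimal normal subgroup of order `d`,
then every minimal normal subgroup of `G` that is a `p`-group has order `d`. -/
theorem thm_minimal_normal_order_eq
    {G : Type*} [Group G] [Finite G] {p : ℕ} (hp : p.Prime)
    (P : Sylow p G) (d : ℕ) (hd : ∃ k : ℕ, d = p ^ k)
    (hd1 : 1 < d) (hd2 : d < Nat.card ↥(P : Subgroup G))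
    (h : ∀ H : Subgroup G, H ≤ (P : Subgroup G) → Nat.card ↥H = d → SatisfiesPartialPi H)
    (hex : ∃ K : Subgroup G, IsMinimalNormal K ∧ Nat.card ↥K = d)
    (N : Subgroup G) (hN : IsMinimalNormal N) (hNp : IsPGroup p ↥N) :
    Nat.card ↥N = d := by
  classical
  haveI : Fact p.Prime := ⟨hp⟩
  obtain ⟨k, hdk⟩ := hd
  obtain ⟨K, hK, hKcard⟩ := hex
  have hk0 : 0 < k := by
    rcases Nat.eq_zero_or_pos k with h0 | h0
    · rw [h0, pow_zero] at hdk; omega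
    · exact h0
  have hNle : N ≤ (P : Subgroup G) := aux_normal_le_sylow hN.1 hNp P
  have hKp : IsPGroup p ↥K := IsPGroup.of_card (by rw [hKcard, hdk])
  have hKle : K ≤ (P : Subgroup G) := aux_normal_le_sylow hK.1 hKp P
  obtain ⟨m, hm⟩ := IsPGroup.iff_card.mp hNp
  have hPp : IsPGroup p ↥(P : Subgroup G) := P.2
  rcases le_or_gt d (Nat.card ↥N) with hge | hlt
  · -- Case A : d ≤ |N|; we produce H ≤ N of order d normalized by P
    have hkm : k ≤ m := by
      rw [hdk, hm] at hge
      exact (Nat.pow_le_pow_iff_right hp.one_lt).mp hge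
    have hcard' : Nat.card (N.subgroupOf (P : Subgroup G)) = Nat.card N :=
      Nat.card_congr (Subgroup.subgroupOfEquivOfLe hNle).toEquiv
    obtain ⟨S', hS'n, hS'le, hS'card⟩ := aux_exists_normal_of_dvd hPp
      (N.subgroupOf (P : Subgroup G)) (hN.1.subgroupOf _) k
      (by rw [hcard', hm]; exact pow_dvd_pow p hkm)
    set H := S'.map (P : Subgroup G).subtype with hHdef
    have hHcard : Nat.card H = d := by
      rw [hHdef, aux_card_map_of_disjoint_s6 _ (by rw [Subgroup.ker_subtype, inf_bot_eq]),
        hS'card, hdk]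
    have hHleP : H ≤ (P : Subgroup G) := Subgroup.map_subtype_le S'
    have hHN : H ≤ N := by
      have h1 : H ≤ (N.subgroupOf (P : Subgroup G)).map (P : Subgroup G).subtype :=
        Subgroup.map_mono hS'le
      rw [Subgroup.subgroupOf_map_subtype] at h1
      exact h1.trans inf_le_left
    have hsub : H.subgroupOf (P : Subgroup G) = S' :=
      Subgroup.comap_map_eq_self_of_injective Subtype.coe_injective S'
    have hHnorm : (P : Subgroup G) ≤ Subgroup.normalizer (H : Set G) := by
      haveI : (H.subgroupOf (P : Subgroup G)).Normal := hsub ▸ hS'n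
      exact Subgroup.le_normalizer_of_normal_subgroupOf hHleP
    obtain ⟨n', σ, hσ, hpi⟩ := h H hHleP hHcard
    obtain ⟨i, h1, h2, h3, h4⟩ := aux_crux P hHnorm hσ hpi hN hNp
    haveI : (σ i.castSucc).Normal := hσ.normal _
    set π := QuotientGroup.mk' (σ i.castSucc) with hπ
    have hkerπ : π.ker = σ i.castSucc := QuotientGroup.ker_mk' _
    have hHdisj : H ⊓ π.ker = ⊥ := by
      rw [hkerπ, eq_bot_iff]
      calc H ⊓ σ i.castSucc ≤ N ⊓ σ i.castSucc := inf_le_inf_right _ hHN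
      _ = ⊥ := h1
    have hHmc : Nat.card (H.map π) = d := by
      rw [aux_card_map_of_disjoint_s6 π hHdisj, hHcard]
    have hXeq : H.map π ⊓ (σ i.succ).map π = H.map π :=
      inf_eq_left.mpr (Subgroup.map_mono (hHN.trans h2))
    have hne : H.map π ⊓ (σ i.succ).map π ≠ ⊥ := by
      rw [hXeq]
      intro hbot
      rw [hbot, Subgroup.card_bot] at hHmc
      omega
    have h5 := h4 hne
    rw [hXeq] at h5
    have hNdisj : N ⊓ π.ker = ⊥ := by rw [hkerπ]; exact h1
    have h6 : Nat.card (N.map π) = Nat.card N := aux_card_map_of_disjoint_s6 π hNdisj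
    rw [← h5, hHmc] at h6
    exact h6.symm
  · -- Case B : |N| < d; derive a contradiction
    exfalso
    have hmk : m < k := by
      rw [hdk] at hlt; rw [hm] at hlt
      exact (Nat.pow_lt_pow_iff_right hp.one_lt).mp hlt
    have hm0 : 0 < m := by
      rcases Nat.eq_zero_or_pos m with h0 | h0
      · exact absurd ((Subgroup.eq_bot_iff_card (H := N)).mpr (by rw [hm, h0, pow_zero])) hN.2.1
      · exact h0
    have hNK : N ⊓ K = ⊥ := by
      rcases hN.2.2 (N ⊓ K) (normal_inf' hN.1 hK.1) inf_le_left with h0 | h0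
      · exact h0
      · exfalso
        have hNleK : N ≤ K := h0 ▸ inf_le_right
        rcases hK.2.2 N hN.1 hNleK with h1 | h1
        · exact hN.2.1 h1
        · have hcNd : Nat.card ↥N = d := by rw [h1]; exact hKcard
          omega
    have hKcard' : Nat.card (K.subgroupOf (P : Subgroup G)) = Nat.card K :=
      Nat.card_congr (Subgroup.subgroupOfEquivOfLe hKle).toEquiv
    obtain ⟨S', hS'n, hS'le, hS'card⟩ := aux_exists_normal_of_dvd hPp
      (K.subgroupOf (P : Subgroup G)) (hK.1.subgroupOf _) (k - m)
      (by rw [hKcard', hKcard, hdk]; exact pow_dvd_pow p (Nat.sub_le k m))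
    set S := S'.map (P : Subgroup G).subtype with hSdef
    have hScard : Nat.card S = p ^ (k - m) := by
      rw [hSdef, aux_card_map_of_disjoint_s6 _ (by rw [Subgroup.ker_subtype, inf_bot_eq]), hS'card]
    have hSleP : S ≤ (P : Subgroup G) := Subgroup.map_subtype_le S'
    have hSK : S ≤ K := by
      have h1 : S ≤ (K.subgroupOf (P : Subgroup G)).map (P : Subgroup G).subtype :=
        Subgroup.map_mono hS'le
      rw [Subgroup.subgroupOf_map_subtype] at h1
      exact h1.trans inf_le_left
    have hsub : S.subgroupOf (P : Subgroup G) = S' :=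
      Subgroup.comap_map_eq_self_of_injective Subtype.coe_injective S'
    have hSnorm : (P : Subgroup G) ≤ Subgroup.normalizer (S : Set G) := by
      haveI : (S.subgroupOf (P : Subgroup G)).Normal := hsub ▸ hS'n
      exact Subgroup.le_normalizer_of_normal_subgroupOf hSleP
    set H := N ⊔ S with hHdef
    have hHleP : H ≤ (P : Subgroup G) := sup_le hNle hSleP
    have hNS : S ⊓ N = ⊥ := by
      rw [eq_bot_iff]
      calc S ⊓ N ≤ K ⊓ N := inf_le_inf_right _ hSK
      _ = N ⊓ K := inf_comm K N
      _ = ⊥ := hNK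
    have hHnorm : (P : Subgroup G) ≤ Subgroup.normalizer (H : Set G) := by
      apply aux_le_normalizer_sup
      · rw [Subgroup.normalizer_eq_top_iff.mpr hN.1]; exact le_top
      · exact hSnorm
    haveI := hN.1
    have hHcard : Nat.card H = d := by
      set ρ := QuotientGroup.mk' N with hρ
      have hkerρ : ρ.ker = N := QuotientGroup.ker_mk' N
      have e1 : Nat.card (H.map ρ) * Nat.card (ρ.ker.subgroupOf H) = Nat.card H :=
        aux_card_map_mul ρ H
      have e2 : H.map ρ = S.map ρ := by
        rw [hHdef, Subgroup.map_sup, QuotientGroup.map_mk'_self, bot_sup_eq]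
      have e3 : Nat.card (S.map ρ) = p ^ (k - m) := by
        rw [aux_card_map_of_disjoint_s6 ρ (by rw [hkerρ]; exact hNS), hScard]
      have e4 : Nat.card (ρ.ker.subgroupOf H) = p ^ m := by
        rw [hkerρ, ← hm]
        exact Nat.card_congr (Subgroup.subgroupOfEquivOfLe (le_sup_left : N ≤ H)).toEquiv
      rw [e2, e3, e4] at e1
      rw [← e1, ← pow_add, Nat.sub_add_cancel hmk.le, hdk]
    obtain ⟨n', σ, hσ, hpi⟩ := h H hHleP hHcard
    obtain ⟨i, h1, h2, h3, h4⟩ := aux_crux P hHnorm hσ hpi hK hKp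
    haveI : (σ i.castSucc).Normal := hσ.normal _
    set π := QuotientGroup.mk' (σ i.castSucc) with hπ
    have hkerπ : π.ker = σ i.castSucc := QuotientGroup.ker_mk' _
    have hSmapc : Nat.card (S.map π) = p ^ (k - m) := by
      have hdisj : S ⊓ π.ker = ⊥ := by
        rw [hkerπ, eq_bot_iff]
        calc S ⊓ σ i.castSucc ≤ K ⊓ σ i.castSucc := inf_le_inf_right _ hSK
        _ = ⊥ := h1
      rw [aux_card_map_of_disjoint_s6 π hdisj, hScard]
    have hSX : S.map π ≤ H.map π ⊓ (σ i.succ).map π :=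
      le_inf (Subgroup.map_mono le_sup_right) (Subgroup.map_mono (hSK.trans h2))
    have hne : H.map π ⊓ (σ i.succ).map π ≠ ⊥ := by
      intro hbot
      have hle1 := Subgroup.card_le_of_le (hbot ▸ hSX)
      rw [hSmapc, Subgroup.card_bot] at hle1
      have hgt : 1 < p ^ (k - m) := Nat.one_lt_pow (by omega) hp.one_lt
      omega
    have h5 := h4 hne
    have hKmapc : Nat.card (K.map π) = d := by
      have hdisj : K ⊓ π.ker = ⊥ := by rw [hkerπ]; exact h1
      rw [aux_card_map_of_disjoint_s6 π hdisj, hKcard]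
    have hKleH : K.map π ≤ H.map π := h5 ▸ inf_le_left
    have hHmapcard : Nat.card (H.map π) = d := by
      have hle1 : d ≤ Nat.card (H.map π) := hKmapc ▸ Subgroup.card_le_of_le hKleH
      have hdvd1 : Nat.card (H.map π) ∣ d := hHcard ▸ aux_card_map_dvd π H
      exact le_antisymm (Nat.le_of_dvd (by omega) hdvd1) hle1
    have hHK : K.map π = H.map π :=
      aux_eq_of_le_of_card_le hKleH (by rw [hKmapc, hHmapcard])
    by_cases hNA : N ≤ σ i.castSucc
    · have e2 : H.map π = S.map π := by
        have hb : N.map π = ⊥ := (Subgroup.map_eq_bot_iff _).mpr (by rw [hkerπ]; exact hNA)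
        rw [hHdef, Subgroup.map_sup, hb, bot_sup_eq]
      rw [e2, hSmapc, hdk] at hHmapcard
      have := Nat.pow_right_injective hp.two_le hHmapcard
      omega
    · have hNmapne : N.map π ≠ ⊥ := by
        intro hbot
        have h9 : N ≤ π.ker := (Subgroup.map_eq_bot_iff _).mp hbot
        rw [hkerπ] at h9
        exact hNA h9
      have hNmapnorm : (N.map π).Normal := hN.1.map π (QuotientGroup.mk'_surjective _)
      have hNle' : N.map π ≤ (σ i.succ).map π := by
        rw [h3, hHK, hHdef]
        exact Subgroup.map_mono le_sup_left
      rcases aux_quot_min (le_of_lt (hσ.mono (Fin.castSucc_lt_succ (i := i)))) (hσ.chief i)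
        hNmapnorm hNle' with h6 | h6
      · exact hNmapne h6
      · have c1 : Nat.card (N.map π) ∣ p ^ m := hm ▸ aux_card_map_dvd π N
        rw [h6, h3, hKmapc] at c1
        have hled : d ≤ p ^ m := Nat.le_of_dvd (pow_pos hp.pos m) c1
        rw [hdk] at hled
        have := (Nat.pow_le_pow_iff_right hp.one_lt).mp hled
        omega
end

section
/- Let G be a finite group, H ≤ G, and N a normal subgroup of G such that either N ≤ H or gcd(|H|, |N|) = 1. If H satisfies the partial Π-property in G, then HN/N satisfies the partial Π-property in G/N. -/
section MyAux

open Subgroup Pointwise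

variable {G : Type*} [Group G] {G' : Type*} [Group G']

lemma myMemSup {H N : Subgroup G} [N.Normal] {x : G} (hx : x ∈ H ⊔ N) :
    ∃ h ∈ H, ∃ n ∈ N, x = h * n := by
  have h2 : x ∈ ((H : Set G) * (N : Set G)) := by
    rw [← Subgroup.mul_normal]; exact_mod_cast hx
  obtain ⟨h, hh, n, hn, rfl⟩ := h2
  exact ⟨h, hh, n, hn, rfl⟩

lemma myMapInf {f : G →* G'} (hf : Function.Surjective f) {X Y : Subgroup G}
    (hX : f.ker ≤ X) (hY : f.ker ≤ Y) : X.map f ⊓ Y.map f = (X ⊓ Y).map f := by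
  rw [← map_comap_eq_self_of_surjective hf (X.map f ⊓ Y.map f), comap_inf,
    comap_map_eq, comap_map_eq, sup_of_le_left hX, sup_of_le_left hY]

lemma myNormalizerSup {T N : Subgroup G} [hN : N.Normal] :
    normalizer (T : Set G) ≤ normalizer ((T ⊔ N : Subgroup G) : Set G) := by
  intro x hx
  rw [mem_normalizer_iff] at hx ⊢
  intro h
  constructor
  · intro hh
    obtain ⟨t, ht, n, hn, rfl⟩ := myMemSup hh
    rw [mul_assoc, mul_assoc]
    rw [← mul_assoc x t, show x * t * (n * x⁻¹) = (x * t * x⁻¹) * (x * n * x⁻¹) by group]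
    exact mul_mem (le_sup_left (α := Subgroup G) ((hx t).mp ht))
      (le_sup_right (α := Subgroup G) (hN.conj_mem n hn x))
  · intro hh
    obtain ⟨t, ht, n, hn, he⟩ := myMemSup hh
    have : h = (x⁻¹ * t * x) * (x⁻¹ * n * x) := by
      have := congrArg (fun y => x⁻¹ * y * x) he
      simpa [mul_assoc] using this
    rw [this]
    refine mul_mem (le_sup_left (α := Subgroup G) ?_)
      (le_sup_right (α := Subgroup G) (by simpa using hN.conj_mem n hn x⁻¹))
    have := (hx (x⁻¹ * t * x)).mpr
    simp only [mul_assoc] at this ⊢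
    simpa using this (by simpa [mul_assoc] using ht)

/-- Index of the normalizer of the image: for `f` surjective with `ker f ≤ T`,
the normalizer of `T.map f` has the same index as the normalizer of `T`. -/
lemma myNormalizerIndex {f : G →* G'} (hf : Function.Surjective f) {T : Subgroup G}
    (hT : f.ker ≤ T) : (normalizer ((T.map f : Subgroup G') : Set G')).index =
      (normalizer (T : Set G)).index := by
  rw [← index_comap_of_surjective _ hf, comap_normalizer_eq_of_surjective _ hf,
    comap_map_eq, sup_of_le_left hT]

lemma myCardMap {f : G →* G'} {T : Subgroup G} :
    Nat.card (T.map f) = f.ker.relIndex T := (relIndex_ker (K := T) f).symm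

lemma myCardMapDvd (f : G →* G') (T : Subgroup G) :
    Nat.card (T.map f) ∣ Nat.card T := by
  classical
  have h1 : T.map f = (f.comp T.subtype).range := by
    rw [MonoidHom.range_comp, range_subtype]
  rw [h1, ← Nat.card_congr (QuotientGroup.quotientKerEquivRange (f.comp T.subtype)).toEquiv]
  exact Subgroup.index_dvd_card _

lemma mySubgroupOfCongr {A B X : Subgroup G} (h : A ⊓ X = B ⊓ X) :
    A.subgroupOf X = B.subgroupOf X := by
  ext y
  simp only [mem_subgroupOf]
  constructor
  · intro hy
    have : (y : G) ∈ B ⊓ X := h ▸ ⟨hy, y.2⟩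
    exact this.1
  · intro hy
    have : (y : G) ∈ A ⊓ X := h ▸ ⟨hy, y.2⟩
    exact this.1

end MyAux
section MyDedup

variable {Q : Type*} [Group Q]

lemma myDedup (C : Subgroup Q → Subgroup Q → Prop) :
    ∀ (n : ℕ) (τ : Fin (n + 1) → Subgroup Q), Monotone τ → τ (Fin.last n) = ⊤ →
      (∀ j, (τ j).Normal) →
      (∀ i : Fin n, τ i.castSucc = τ i.succ ∨
        (IsChiefFactor (τ i.castSucc) (τ i.succ) ∧ C (τ i.castSucc) (τ i.succ))) →
      ∃ (m : ℕ) (σ : Fin (m + 1) → Subgroup Q), σ 0 = τ 0 ∧ σ (Fin.last m) = ⊤ ∧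
        StrictMono σ ∧ (∀ j, (σ j).Normal) ∧
        ∀ i : Fin m, IsChiefFactor (σ i.castSucc) (σ i.succ) ∧
          C (σ i.castSucc) (σ i.succ) := by
  intro n
  induction n with
  | zero =>
    intro τ _ htop hnorm _
    exact ⟨0, τ, rfl, htop, fun a b hab => absurd ((Fin.eq_zero a).trans (Fin.eq_zero b).symm) hab.ne,
      hnorm, fun i => i.elim0⟩
  | succ n ih =>
    intro τ hmono htop hnorm hstep
    obtain ⟨m, σ, h0, htop', hsm, hnorm', hsteps⟩ :=
      ih (fun j => τ j.succ) (fun a b hab => hmono (Fin.succ_le_succ_iff.mpr hab))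
        (by show τ ((Fin.last n).succ) = ⊤; rw [Fin.succ_last]; exact htop) (fun j => hnorm _)
        (fun i => by
          have h := hstep i.succ
          rwa [← Fin.succ_castSucc] at h)
    rcases hstep 0 with heq | hch
    · refine ⟨m, σ, ?_, htop', hsm, hnorm', hsteps⟩
      rw [h0]
      rw [Fin.castSucc_zero] at heq
      exact heq.symm
    · refine ⟨m + 1, Fin.cases (motive := fun _ => Subgroup Q) (τ 0) σ, by simp, ?_, ?_, ?_, ?_⟩
      · show Fin.cases (motive := fun _ => Subgroup Q) (τ 0) σ (Fin.last (m+1)) = ⊤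
        rw [← Fin.succ_last]
        simp only [Fin.cases_succ]
        exact htop'
      · rw [Fin.strictMono_iff_lt_succ]
        intro i
        induction i using Fin.cases with
        | zero =>
          simp only [Fin.castSucc_zero, Fin.cases_zero, Fin.cases_succ]
          rw [h0]
          rw [Fin.castSucc_zero] at hch
          exact hch.1.lt
        | succ j =>
          simp only [← Fin.succ_castSucc, Fin.cases_succ]
          exact hsm (Fin.castSucc_lt_succ (i := j))
      · intro j
        induction j using Fin.cases with
        | zero => simpa using hnorm 0
        | succ j => simpa using hnorm' j
      · intro i
        induction i using Fin.cases with
        | zero =>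
          simp only [Fin.castSucc_zero, Fin.cases_zero, Fin.cases_succ]
          rw [h0]
          rw [Fin.castSucc_zero] at hch
          exact hch
        | succ j =>
          simp only [← Fin.succ_castSucc, Fin.cases_succ]
          exact hsteps j

lemma myDedupChief (C : Subgroup Q → Subgroup Q → Prop)
    (n : ℕ) (τ : Fin (n + 1) → Subgroup Q) (hbot : τ 0 = ⊥) (hmono : Monotone τ)
    (htop : τ (Fin.last n) = ⊤) (hnorm : ∀ j, (τ j).Normal)
    (hstep : ∀ i : Fin n, τ i.castSucc = τ i.succ ∨
        (IsChiefFactor (τ i.castSucc) (τ i.succ) ∧ C (τ i.castSucc) (τ i.succ))) :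
    ∃ (m : ℕ) (σ : Fin (m + 1) → Subgroup Q) (hσ : IsChiefSeries σ),
      ∀ i : Fin m, C (σ i.castSucc) (σ i.succ) := by
  obtain ⟨m, σ, h0, htop', hsm, hnorm', hsteps⟩ := myDedup C n τ hmono htop hnorm hstep
  refine ⟨m, σ, ⟨h0.trans hbot, htop', hsm, hnorm', fun i M hM h1 h2 => (hsteps i).1.chief M hM h1 h2⟩,
    fun i => (hsteps i).2⟩

end MyDedup
section MyMain
open Subgroup Pointwise

variable {G : Type*} [Group G] [Finite G]

lemma myClaim1 (H K L N : Subgroup G) [hN : N.Normal] [hK : K.Normal] [hL : L.Normal]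
    (hKL : K ≤ L)
    (hco : N ≤ H ∨ Nat.Coprime (Nat.card H) (Nat.card N)) :
    (H ⊔ (K ⊔ N)) ⊓ (L ⊔ N) = ((H ⊔ K) ⊓ L) ⊔ N := by
  set T := (H ⊔ K) ⊓ L with hT
  have hTle1 : T ≤ H ⊔ K := inf_le_left
  have hTle2 : T ≤ L := inf_le_right
  refine le_antisymm ?_ (sup_le (le_inf (hTle1.trans (sup_le_sup_left le_sup_left H))
    (hTle2.trans le_sup_left)) (le_inf (le_sup_right.trans le_sup_right) le_sup_right))
  rw [← sup_assoc]
  rcases hco with hNH | hco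
  · -- N ≤ H
    intro x hx
    obtain ⟨l, hl, n, hn, rfl⟩ := myMemSup hx.2
    have hHK : (H ⊔ K) ⊔ N = H ⊔ K := sup_eq_left.mpr (hNH.trans le_sup_left)
    have hx1 : l * n ∈ H ⊔ K := hHK ▸ hx.1
    have hnHK : n ∈ H ⊔ K := le_sup_left (α := Subgroup G) (hNH hn)
    have hlHK : l ∈ H ⊔ K := by
      have := mul_mem hx1 (inv_mem hnHK)
      simpa using this
    have hlT : l ∈ T := Subgroup.mem_inf.mpr ⟨hlHK, hl⟩
    exact mul_mem (le_sup_left (α := Subgroup G) hlT) (le_sup_right (α := Subgroup G) hn)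
  · -- coprime case
    intro x hx
    obtain ⟨y, hy, n, hn, rfl⟩ := myMemSup hx.1
    set X := (H ⊔ K) ⊓ (L ⊔ N) with hX
    have hyX : y ∈ X := by
      refine ⟨hy, ?_⟩
      have := mul_mem hx.2 (le_sup_right (α := Subgroup G) (inv_mem hn) : n⁻¹ ∈ L ⊔ N)
      simpa using this
    have hTX : T ≤ X := le_inf hTle1 (hTle2.trans le_sup_left)
    suffices hXT : X ≤ T by
      exact mul_mem (le_sup_left (α := Subgroup G) (hXT hyX)) (le_sup_right (α := Subgroup G) hn)
    have hKT : K ≤ T := le_inf le_sup_right hKL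
    set d := (T.subgroupOf X).index with hd
    have hd1 : d ∣ Nat.card H := by
      have h1 : d ∣ (K.subgroupOf X).index :=
        Subgroup.index_dvd_of_le (Subgroup.comap_mono hKT)
      have h2 : (K.subgroupOf X).index = Nat.card (X.map (QuotientGroup.mk' K)) := by
        have := myCardMap (f := QuotientGroup.mk' K) (T := X)
        rw [QuotientGroup.ker_mk'] at this
        exact this.symm
      have h3 : Nat.card (X.map (QuotientGroup.mk' K)) ∣
          Nat.card (H.map (QuotientGroup.mk' K)) := by
        have hbk : K.map (QuotientGroup.mk' K) = ⊥ :=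
          (Subgroup.map_eq_bot_iff K).mpr (le_of_eq (QuotientGroup.ker_mk' K).symm)
        have hmap : (H ⊔ K).map (QuotientGroup.mk' K) = H.map (QuotientGroup.mk' K) := by
          rw [Subgroup.map_sup, hbk, sup_bot_eq]
        rw [← hmap]
        exact Subgroup.card_dvd_of_le (Subgroup.map_mono inf_le_left)
      exact (h2 ▸ h1).trans (h3.trans (myCardMapDvd _ _))
    have hd2 : d ∣ Nat.card N := by
      have hTXL : T.subgroupOf X = L.subgroupOf X := by
        apply mySubgroupOfCongr
        have e1 : T ⊓ X = T := inf_eq_left.mpr hTX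
        have e2 : L ⊓ X = T := by
          refine le_antisymm (fun z hz => ?_) (le_inf hTle2 hTX)
          obtain ⟨hzL, hzX⟩ := Subgroup.mem_inf.mp hz
          exact Subgroup.mem_inf.mpr ⟨(Subgroup.mem_inf.mp hzX).1, hzL⟩
        rw [e1, e2]
      have h2 : (L.subgroupOf X).index = Nat.card (X.map (QuotientGroup.mk' L)) := by
        have := myCardMap (f := QuotientGroup.mk' L) (T := X)
        rw [QuotientGroup.ker_mk'] at this
        exact this.symm
      have h3 : Nat.card (X.map (QuotientGroup.mk' L)) ∣
          Nat.card (N.map (QuotientGroup.mk' L)) := by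
        have hbl : L.map (QuotientGroup.mk' L) = ⊥ :=
          (Subgroup.map_eq_bot_iff L).mpr (le_of_eq (QuotientGroup.ker_mk' L).symm)
        have hmap : (L ⊔ N).map (QuotientGroup.mk' L) = N.map (QuotientGroup.mk' L) := by
          rw [Subgroup.map_sup, hbl, bot_sup_eq]
        rw [← hmap]
        exact Subgroup.card_dvd_of_le (Subgroup.map_mono inf_le_right)
      rw [hd, hTXL, h2]
      exact h3.trans (myCardMapDvd _ _)
    have hone : d = 1 := Nat.dvd_one.mp (hco ▸ Nat.dvd_gcd hd1 hd2)
    exact Subgroup.subgroupOf_eq_top.mp (Subgroup.index_eq_one.mp hone)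

end MyMain
section MyMain2
open Subgroup Pointwise

variable {G : Type*} [Group G] [Finite G]

lemma myHinf (K L N : Subgroup G) [hN : N.Normal] [hK : K.Normal] [hL : L.Normal]
    (hKL : K < L)
    (hchief : ∀ M : Subgroup G, M.Normal → K ≤ M → M ≤ L → M = K ∨ M = L)
    (hnc : ¬ L ≤ K ⊔ N) : L ⊓ (K ⊔ N) = K := by
  rcases hchief (L ⊓ (K ⊔ N)) (normal_inf' hL inferInstance)
      (le_inf hKL.le le_sup_left) inf_le_left with h | h
  · exact h
  · exact absurd ((le_of_eq h.symm).trans inf_le_right) hnc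

lemma myChiefBar (K L N : Subgroup G) [hN : N.Normal] [hK : K.Normal] [hL : L.Normal]
    (hKL : K < L)
    (hchief : ∀ M : Subgroup G, M.Normal → K ≤ M → M ≤ L → M = K ∨ M = L)
    (hnc : ¬ L ≤ K ⊔ N) :
    IsChiefFactor ((K ⊔ N).map (QuotientGroup.mk' N)) ((L ⊔ N).map (QuotientGroup.mk' N)) := by
  set π := QuotientGroup.mk' N with hπ
  have hπs : Function.Surjective π := QuotientGroup.mk'_surjective N
  have hinf : L ⊓ (K ⊔ N) = K := myHinf K L N hKL hchief hnc
  have hcomapK : comap π ((K ⊔ N).map π) = K ⊔ N := by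
    rw [comap_map_eq, QuotientGroup.ker_mk', sup_of_le_left le_sup_right]
  have hcomapL : comap π ((L ⊔ N).map π) = L ⊔ N := by
    rw [comap_map_eq, QuotientGroup.ker_mk', sup_of_le_left le_sup_right]
  refine ⟨Subgroup.Normal.map inferInstance π hπs, Subgroup.Normal.map inferInstance π hπs, ?_, ?_⟩
  · refine lt_of_le_of_ne (map_mono (sup_le_sup_right hKL.le N)) (fun he => hnc ?_)
    have : K ⊔ N = L ⊔ N := by rw [← hcomapK, ← hcomapL, he]
    exact le_sup_left.trans (le_of_eq this.symm)
  · intro Mb hMb h1 h2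
    set M := comap π Mb with hM
    haveI hMn : M.Normal := hMb.comap π
    have hM1 : K ⊔ N ≤ M := by rw [← hcomapK]; exact comap_mono h1
    have hM2 : M ≤ L ⊔ N := by rw [← hcomapL]; exact comap_mono h2
    have hNM : N ≤ M := le_sup_right.trans hM1
    have key : M = K ⊔ N ∨ M = L ⊔ N := by
      rcases hchief (L ⊓ M) (normal_inf' hL hMn)
          (le_inf hKL.le (le_sup_left.trans hM1)) inf_le_left with h | h
      · left
        refine le_antisymm (fun x hx => ?_) hM1
        obtain ⟨l, hl, n, hn, rfl⟩ := myMemSup (hM2 hx)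
        have hlM : l ∈ M := by
          have := mul_mem hx (inv_mem (hNM hn))
          simpa using this
        have : l ∈ K := h ▸ Subgroup.mem_inf.mpr ⟨hl, hlM⟩
        exact mul_mem (le_sup_left (α := Subgroup G) this) (le_sup_right (α := Subgroup G) hn)
      · right
        refine le_antisymm hM2 (sup_le ?_ hNM)
        exact (le_of_eq h.symm).trans inf_le_right
    have hMbe : Mb = M.map π := (map_comap_eq_self_of_surjective hπs Mb).symm
    rcases key with h | h
    · left; rw [hMbe, h]
    · right; rw [hMbe, h]

end MyMain2
section MyMain3
open Subgroup Pointwise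

variable {G : Type*} [Group G] [Finite G]

/-- The per-step condition appearing in `SatisfiesPartialPi`, for the group `G ⧸ N`. -/
def myCond (N : Subgroup G) [hN : N.Normal] (H : Subgroup G) (Kb Lb : Subgroup (G ⧸ N)) : Prop :=
  ∀ (h : Kb.Normal) (q : ℕ), q.Prime →
    q ∣ (Subgroup.normalizer (((H.map (QuotientGroup.mk' N)).map (@QuotientGroup.mk' _ _ Kb h) ⊓
        Lb.map (@QuotientGroup.mk' _ _ Kb h) : Subgroup ((G ⧸ N) ⧸ Kb)) :
        Set ((G ⧸ N) ⧸ Kb))).index →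
    q ∣ Nat.card ↥((H.map (QuotientGroup.mk' N)).map (@QuotientGroup.mk' _ _ Kb h) ⊓
        Lb.map (@QuotientGroup.mk' _ _ Kb h))

lemma myPiBar (H K L N : Subgroup G) [hN : N.Normal] [hK : K.Normal] [hL : L.Normal]
    (hKL : K < L)
    (hchief : ∀ M : Subgroup G, M.Normal → K ≤ M → M ≤ L → M = K ∨ M = L)
    (hnc : ¬ L ≤ K ⊔ N)
    (hco : N ≤ H ∨ Nat.Coprime (Nat.card H) (Nat.card N))
    (hbase : ∀ q : ℕ, q.Prime →
        q ∣ (Subgroup.normalizer ((H.map (QuotientGroup.mk' K) ⊓ L.map (QuotientGroup.mk' K) :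
          Subgroup (G ⧸ K)) : Set (G ⧸ K))).index →
        q ∣ Nat.card ↥(H.map (QuotientGroup.mk' K) ⊓ L.map (QuotientGroup.mk' K))) :
    myCond N H ((K ⊔ N).map (QuotientGroup.mk' N)) ((L ⊔ N).map (QuotientGroup.mk' N)) := by
  intro hKb q hq hdvd
  set π := QuotientGroup.mk' N with hπdef
  have hπs : Function.Surjective π := QuotientGroup.mk'_surjective N
  set Kb := (K ⊔ N).map π with hKbdef
  letI := hKb
  set ρ := QuotientGroup.mk' K with hρdef
  have hρs : Function.Surjective ρ := QuotientGroup.mk'_surjective K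
  set ρb := QuotientGroup.mk' Kb with hρbdef
  have hρbs : Function.Surjective ρb := QuotientGroup.mk'_surjective Kb
  set g := ρb.comp π with hgdef
  have hgs : Function.Surjective g := hρbs.comp hπs
  have hinf : L ⊓ (K ⊔ N) = K := myHinf K L N hKL hchief hnc
  set T := (H ⊔ K) ⊓ L with hTdef
  have hKT : K ≤ T := le_inf le_sup_right hKL.le
  have hkerπ : π.ker = N := QuotientGroup.ker_mk' N
  have hkerρ : ρ.ker = K := QuotientGroup.ker_mk' K
  have hkerg : g.ker = K ⊔ N := by
    rw [hgdef, ← MonoidHom.comap_ker, QuotientGroup.ker_mk', hKbdef, comap_map_eq,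
      hkerπ, sup_of_le_left le_sup_right]
  have E1 : H.map ρ ⊓ L.map ρ = T.map ρ := by
    have h1 : comap ρ (H.map ρ ⊓ L.map ρ) = T := by
      rw [comap_inf, comap_map_eq, comap_map_eq, hkerρ, sup_of_le_left hKL.le]
    rw [← map_comap_eq_self_of_surjective hρs (H.map ρ ⊓ L.map ρ), h1]
  have hmapN : N.map π = ⊥ := (Subgroup.map_eq_bot_iff N).mpr (le_of_eq hkerπ.symm)
  have E3 : (H.map π).map ρb ⊓ ((L ⊔ N).map π).map ρb = T.map g := by
    have hKbLb : Kb ≤ (L ⊔ N).map π := map_mono (sup_le_sup_right hKL.le N)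
    have h1 : comap ρb ((H.map π).map ρb ⊓ ((L ⊔ N).map π).map ρb)
        = (H ⊔ (K ⊔ N)).map π ⊓ (L ⊔ N).map π := by
      rw [comap_inf, comap_map_eq, comap_map_eq, QuotientGroup.ker_mk',
        sup_of_le_left hKbLb, hKbdef, ← Subgroup.map_sup]
    have h2 : (H ⊔ (K ⊔ N)).map π ⊓ (L ⊔ N).map π = ((H ⊔ (K ⊔ N)) ⊓ (L ⊔ N)).map π := by
      refine myMapInf hπs ?_ ?_ <;> rw [hkerπ]
      · exact le_sup_right.trans le_sup_right
      · exact le_sup_right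
    have h3 : ((H ⊔ (K ⊔ N)) ⊓ (L ⊔ N)).map π = T.map π := by
      rw [myClaim1 H K L N hKL.le hco, Subgroup.map_sup, hmapN, sup_bot_eq]
    rw [← map_comap_eq_self_of_surjective hρbs
      ((H.map π).map ρb ⊓ ((L ⊔ N).map π).map ρb), h1, h2, h3, Subgroup.map_map]
  have idx1 : (normalizer ((T.map ρ : Subgroup (G ⧸ K)) : Set (G ⧸ K))).index =
      (normalizer (T : Set G)).index :=
    myNormalizerIndex hρs (by rw [hkerρ]; exact hKT)
  have hmapgN : N.map g = ⊥ :=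
    (Subgroup.map_eq_bot_iff N).mpr (hkerg ▸ le_sup_right)
  have hmapTN : T.map g = (T ⊔ N).map g := by
    rw [Subgroup.map_sup, hmapgN, sup_bot_eq]
  have idx2 : (normalizer ((T.map g : Subgroup ((G ⧸ N) ⧸ Kb)) : Set ((G ⧸ N) ⧸ Kb))).index =
      (normalizer ((T ⊔ N : Subgroup G) : Set G)).index := by
    rw [hmapTN]
    exact myNormalizerIndex hgs (by rw [hkerg]; exact sup_le_sup_right hKT N)
  have dvdIdx : (normalizer ((T ⊔ N : Subgroup G) : Set G)).index ∣ (normalizer (T : Set G)).index :=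
    Subgroup.index_dvd_of_le myNormalizerSup
  have c1 : Nat.card ((T.map ρ) : Subgroup (G ⧸ K)) = K.relIndex T := by
    rw [myCardMap, hkerρ]
  have c2 : Nat.card ((T.map g) : Subgroup ((G ⧸ N) ⧸ Kb)) = K.relIndex T := by
    rw [myCardMap, hkerg]
    have h4 : (K ⊔ N) ⊓ T = K ⊓ T := by
      refine le_antisymm (fun x hx => ?_) (inf_le_inf_right T le_sup_left)
      obtain ⟨hx1, hx2⟩ := Subgroup.mem_inf.mp hx
      have hxK : x ∈ K := hinf ▸ Subgroup.mem_inf.mpr ⟨inf_le_right (a := H ⊔ K) hx2, hx1⟩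
      exact Subgroup.mem_inf.mpr ⟨hxK, hx2⟩
    rw [← inf_relIndex_right, h4, inf_relIndex_right]
  rw [E3] at hdvd ⊢
  rw [idx2] at hdvd
  have hq2 : q ∣ (normalizer (T : Set G)).index := hdvd.trans dvdIdx
  have hb := hbase q hq (by rw [E1, idx1]; exact hq2)
  rw [E1, c1] at hb
  rw [c2]
  exact hb

end MyMain3

/-- If `N ⊴ G` with `N ≤ H` or `gcd(|H|, |N|) = 1`, and `H` satisfies the
partial Π-property in `G`, then `HN/N` satisfies the partial Π-property in `G/N`. -/
theorem thm_partial_pi_quotient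
    {G : Type*} [Group G] [Finite G]
    (H : Subgroup G) (N : Subgroup G) (hN : N.Normal)
    (hcond : N ≤ H ∨ Nat.Coprime (Nat.card ↥H) (Nat.card ↥N))
    (hH : SatisfiesPartialPi H) :
    haveI := hN;
    SatisfiesPartialPi (H.map (QuotientGroup.mk' N)) := by
  haveI := hN
  obtain ⟨n, σ, hσ, hPi⟩ := hH
  set π := QuotientGroup.mk' N with hπdef
  have hπs : Function.Surjective π := QuotientGroup.mk'_surjective N
  have hkerπ : π.ker = N := QuotientGroup.ker_mk' N
  have hnormτ : ∀ j, ((σ j ⊔ N).map π).Normal := by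
    intro j
    haveI := hσ.normal j
    exact Subgroup.Normal.map inferInstance π hπs
  have hstep : ∀ i : Fin n,
      (fun j => (σ j ⊔ N).map π) i.castSucc = (fun j => (σ j ⊔ N).map π) i.succ ∨
      (IsChiefFactor ((fun j => (σ j ⊔ N).map π) i.castSucc) ((fun j => (σ j ⊔ N).map π) i.succ) ∧
        myCond N H ((fun j => (σ j ⊔ N).map π) i.castSucc) ((fun j => (σ j ⊔ N).map π) i.succ)) := by
    intro i
    haveI := hσ.normal i.castSucc
    haveI := hσ.normal i.succ
    have hKL := hσ.mono (Fin.castSucc_lt_succ (i := i))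
    by_cases hnc : σ i.succ ≤ σ i.castSucc ⊔ N
    · left
      show (σ i.castSucc ⊔ N).map π = (σ i.succ ⊔ N).map π
      have : σ i.castSucc ⊔ N = σ i.succ ⊔ N :=
        le_antisymm (sup_le_sup_right hKL.le N) (sup_le hnc le_sup_right)
      rw [this]
    · right
      exact ⟨myChiefBar _ _ _ hKL (fun M a b c => hσ.chief i M a b c) hnc,
        myPiBar H _ _ N hKL (fun M a b c => hσ.chief i M a b c) hnc hcond (hPi i)⟩
  obtain ⟨m, σ', hσ', hC⟩ := myDedupChief (myCond N H) n (fun j => (σ j ⊔ N).map π)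
    (by rw [hσ.bot, bot_sup_eq]
        exact (Subgroup.map_eq_bot_iff N).mpr (le_of_eq hkerπ.symm))
    (fun a b hab => Subgroup.map_mono (sup_le_sup_right (hσ.mono.monotone hab) N))
    (by rw [hσ.top, top_sup_eq]; exact Subgroup.map_top_of_surjective π hπs)
    hnormτ hstep
  exact ⟨m, σ', hσ', fun i => hC i (hσ'.normal _)⟩
end

section
/- Let G be a finite group, p a prime, H a p-subgroup of G, and N a normal subgroup of G containing H. If H satisfies the partial Π-property in G, then G has a chief series 1 = G*_0 < G*_1 < ⋯ < G*_r = N < ⋯ < G*_n = G passing through N such that for every i with 1 ≤ i ≤ n, the index |G : N_G(HG*_{i-1} ∩ G*_i)| is a p-number (a power of p). -/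
section Omega

section MyAux

variable {G : Type*} [Group G]

lemma my_map_inf_of_ker_le {G' : Type*} [Group G'] (f : G →* G') {A B : Subgroup G}
    (hA : f.ker ≤ A) : (A ⊓ B).map f = A.map f ⊓ B.map f := by
  refine le_antisymm (le_inf (Subgroup.map_mono inf_le_left) (Subgroup.map_mono inf_le_right)) ?_
  rintro y ⟨⟨a, ha, hay⟩, ⟨b, hb, hby⟩⟩
  have hk : a⁻¹ * b ∈ f.ker := by
    rw [MonoidHom.mem_ker, map_mul, map_inv, hay, hby, inv_mul_cancel]
  have hbA : b ∈ A := by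
    have := mul_mem ha (hA hk)
    rwa [mul_inv_cancel_left] at this
  exact ⟨b, ⟨hbA, hb⟩, hby⟩

lemma my_normalizer_index_map (K M : Subgroup G) [K.Normal] (hKM : K ≤ M) :
    (Subgroup.normalizer ((M.map (QuotientGroup.mk' K) : Subgroup (G ⧸ K)) : Set (G ⧸ K))).index = (Subgroup.normalizer (M : Set G)).index := by
  have hsurj := QuotientGroup.mk'_surjective K
  rw [← Subgroup.index_comap_of_surjective (hf := hsurj),
    Subgroup.comap_normalizer_eq_of_surjective _ hsurj, Subgroup.comap_map_eq,
    QuotientGroup.ker_mk', sup_of_le_left hKM]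

lemma my_normalizer_le_inf {X N : Subgroup G} (hN : N.Normal) :
    Subgroup.normalizer (X : Set G) ≤ Subgroup.normalizer ((X ⊓ N : Subgroup G) : Set G) := by
  intro g hg
  rw [Subgroup.mem_normalizer_iff] at hg ⊢
  intro h
  simp only [Subgroup.mem_inf]
  constructor
  · rintro ⟨h1, h2⟩
    exact ⟨(hg h).mp h1, hN.conj_mem _ h2 g⟩
  · rintro ⟨h1, h2⟩
    refine ⟨(hg h).mpr h1, ?_⟩
    have h3 := hN.conj_mem _ h2 g⁻¹
    simpa [mul_assoc] using h3

lemma my_chain_dedup (Q : Subgroup G → Subgroup G → Prop) :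
    ∀ (m : ℕ) (f : ℕ → Subgroup G),
    (∀ i < m, f i = f (i + 1) ∨ (f i < f (i + 1) ∧ Q (f i) (f (i + 1)))) →
    ∀ r ≤ m,
    ∃ (n : ℕ) (σ : Fin (n + 1) → Subgroup G),
      σ 0 = f 0 ∧ σ (Fin.last n) = f m ∧ StrictMono σ ∧
      (∀ i : Fin n, Q (σ i.castSucc) (σ i.succ)) ∧ ∃ j, σ j = f r := by
  intro m
  induction m with
  | zero =>
    intro f _ r hr
    have hr0 : r = 0 := Nat.le_zero.mp hr
    subst hr0
    refine ⟨0, fun _ => f 0, rfl, rfl, ?_, fun i => i.elim0, 0, rfl⟩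
    intro i j h
    have hi := i.isLt
    have hjlt := j.isLt
    have hij : i.val < j.val := h
    exact absurd hij (by omega)
  | succ m ih =>
    intro f hstep r hr
    obtain ⟨n, σ, h0, hlast, hmono, hQ, j, hj⟩ :=
      ih f (fun i hi => hstep i (by omega)) (min r m) (min_le_right _ _)
    rcases hstep m (by omega) with heq | ⟨hlt, hQm⟩
    · refine ⟨n, σ, h0, by rw [hlast, heq], hmono, hQ, ?_⟩
      rcases Nat.lt_or_ge r (m + 1) with h | h
      · exact ⟨j, by rwa [Nat.min_eq_left (by omega)] at hj⟩
      · have hrm : r = m + 1 := by omega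
        subst hrm
        exact ⟨j, by rw [hj, Nat.min_eq_right (by omega), ← heq]⟩
    · have hlastlt : ∀ i : Fin (n + 1), σ i < f (m + 1) := fun i =>
        lt_of_le_of_lt (by rw [← hlast]; exact hmono.monotone (Fin.le_last i)) hlt
      refine ⟨n + 1, Fin.snoc σ (f (m + 1)), ?_, ?_, ?_, ?_, ?_⟩
      · rw [show (0 : Fin (n + 2)) = (0 : Fin (n + 1)).castSucc from rfl,
          Fin.snoc_castSucc, h0]
      · rw [Fin.snoc_last]
      · intro a b hab
        rcases Fin.eq_castSucc_or_eq_last b with ⟨b', rfl⟩ | rfl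
        · have ha : a ≠ Fin.last (n + 1) := by
            intro h; subst h
            exact absurd (le_of_lt hab) (not_le.mpr (Fin.castSucc_lt_last b'))
          obtain ⟨a', rfl⟩ := Fin.exists_castSucc_eq.mpr ha
          rw [Fin.snoc_castSucc, Fin.snoc_castSucc]
          exact hmono (by exact_mod_cast hab)
        · have ha : a ≠ Fin.last (n + 1) := ne_of_lt hab
          obtain ⟨a', rfl⟩ := Fin.exists_castSucc_eq.mpr ha
          rw [Fin.snoc_castSucc, Fin.snoc_last]
          exact hlastlt a'
      · intro i
        rcases Fin.eq_castSucc_or_eq_last i with ⟨i', rfl⟩ | rfl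
        · rw [Fin.succ_castSucc, Fin.snoc_castSucc, Fin.snoc_castSucc]
          exact hQ i'
        · rw [Fin.succ_last, Fin.snoc_last, Fin.snoc_castSucc, hlast]
          exact hQm
      · rcases Nat.lt_or_ge r (m + 1) with h | h
        · refine ⟨j.castSucc, ?_⟩
          rw [Fin.snoc_castSucc, hj, Nat.min_eq_left (by omega)]
        · have hrm : r = m + 1 := by omega
          subst hrm
          exact ⟨Fin.last (n + 1), Fin.snoc_last _ _⟩

end MyAux

theorem thm_chief_series_through
    {G : Type*} [Group G] [Finite G] {p : ℕ} (hp : p.Prime)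
    (H N : Subgroup G) (hHp : IsPGroup p ↥H) (hN : N.Normal) (hHN : H ≤ N)
    (hH : SatisfiesPartialPi H) :
    ∃ (n : ℕ) (σ : Fin (n + 1) → Subgroup G) (_ : IsChiefSeries σ) (r : Fin (n + 1)),
      σ r = N ∧
      ∀ i : Fin n, ∃ k : ℕ,
        (Subgroup.normalizer (((H ⊔ σ i.castSucc) ⊓ σ i.succ : Subgroup G) : Set G)).index = p ^ k := by
  haveI : Fact p.Prime := ⟨hp⟩
  haveI := hN
  obtain ⟨n₀, σ₀, hσ₀, hcond⟩ := hH
  -- Step A: the original series has p-power normalizer indices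
  have key : ∀ i : Fin n₀, ∃ k : ℕ,
      (Subgroup.normalizer (((H ⊔ σ₀ i.castSucc) ⊓ σ₀ i.succ : Subgroup G) : Set G)).index = p ^ k := by
    intro i
    haveI hKn : (σ₀ i.castSucc).Normal := hσ₀.normal _
    set K := σ₀ i.castSucc with hK
    set L := σ₀ i.succ with hL
    set φ := QuotientGroup.mk' K with hφ
    have hKL : K ≤ L := (hσ₀.mono (Fin.castSucc_lt_succ (i := i))).le
    have hker : φ.ker = K := QuotientGroup.ker_mk' K
    have hKbot : K.map φ = ⊥ := (Subgroup.map_eq_bot_iff _).mpr hker.ge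
    have hmapinf : H.map φ ⊓ L.map φ = ((H ⊔ K) ⊓ L).map φ := by
      rw [my_map_inf_of_ker_le φ (hker.le.trans le_sup_right), Subgroup.map_sup, hKbot,
        sup_bot_eq]
    have hpA : IsPGroup p ↥(H.map φ ⊓ L.map φ) := (hHp.map φ).to_le inf_le_left
    obtain ⟨a, ha⟩ := IsPGroup.iff_card.mp hpA
    have hne : (Subgroup.normalizer ((H.map φ ⊓ L.map φ : Subgroup (G ⧸ K)) : Set (G ⧸ K))).index ≠ 0 :=
      Subgroup.index_ne_zero_of_finite
    have hpow := Nat.eq_prime_pow_of_unique_prime_dvd hne (fun {q} hq hdvd => by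
      have hcard := hcond i q hq hdvd
      rw [ha] at hcard
      exact (Nat.prime_dvd_prime_iff_eq hq hp).mp (hq.dvd_of_dvd_pow hcard))
    rw [hmapinf, my_normalizer_index_map K ((H ⊔ K) ⊓ L) (le_inf le_sup_right hKL)] at hpow
    exact ⟨_, hpow⟩
  rcases Nat.eq_zero_or_pos n₀ with hn0 | hn0
  · -- trivial group case
    subst hn0
    have htriv : (⊥ : Subgroup G) = ⊤ := by
      rw [← hσ₀.bot, show (0 : Fin 1) = Fin.last 0 from rfl, hσ₀.top]
    have hNbot : N = ⊥ := le_bot_iff.mp (htriv ▸ le_top)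
    refine ⟨0, fun _ => ⊥, ⟨rfl, htriv ▸ rfl, ?_, fun _ => inferInstance, fun i => i.elim0⟩,
      0, hNbot.symm, fun i => i.elim0⟩
    intro i j h
    have hi := i.isLt
    have hjlt := j.isLt
    have hij : i.val < j.val := h
    exact absurd hij (by omega)
  -- main case
  · set s : ℕ → Subgroup G := fun i => if h : i ≤ n₀ then σ₀ ⟨i, Nat.lt_succ_of_le h⟩ else ⊤
      with hsdef
    have hs : ∀ i (h : i ≤ n₀), s i = σ₀ ⟨i, Nat.lt_succ_of_le h⟩ := fun i h => dif_pos h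
    have hs0 : s 0 = ⊥ := by
      rw [hs 0 (Nat.zero_le _), show (⟨0, Nat.lt_succ_of_le (Nat.zero_le n₀)⟩ : Fin (n₀ + 1))
        = 0 from by ext; simp, hσ₀.bot]
    have hstop : s n₀ = ⊤ := by
      rw [hs n₀ le_rfl, show (⟨n₀, Nat.lt_succ_of_le le_rfl⟩ : Fin (n₀ + 1))
        = Fin.last n₀ from rfl, hσ₀.top]
    set f : ℕ → Subgroup G := fun i => if i ≤ n₀ then s i ⊓ N else N ⊔ s (i - n₀) with hfdef
    have hf_le : ∀ i, i ≤ n₀ → f i = s i ⊓ N := fun i h => if_pos h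
    have hf_gt : ∀ i, n₀ < i → f i = N ⊔ s (i - n₀) := fun i h => if_neg (not_le.mpr h)
    have hf0 : f 0 = ⊥ := by rw [hf_le 0 (Nat.zero_le _), hs0, bot_inf_eq]
    have hfn : f n₀ = N := by rw [hf_le n₀ le_rfl, hstop, top_inf_eq]
    have hftop : f (2 * n₀) = ⊤ := by
      rw [hf_gt _ (by omega), show 2 * n₀ - n₀ = n₀ from by omega, hstop, sup_top_eq]
    have hfn' : ∀ i, n₀ ≤ i → f i = N ⊔ s (i - n₀) := by
      intro i h1
      rcases eq_or_lt_of_le h1 with rfl | h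
      · rw [hfn, Nat.sub_self, hs0, sup_bot_eq]
      · exact hf_gt i h
    have hstep : ∀ i < 2 * n₀, f i = f (i + 1) ∨ (f i < f (i + 1) ∧
        ((f i).Normal ∧ (f (i + 1)).Normal ∧
          (∀ M : Subgroup G, M.Normal → f i ≤ M → M ≤ f (i + 1) → M = f i ∨ M = f (i + 1)) ∧
          ∃ k : ℕ, (Subgroup.normalizer (((H ⊔ f i) ⊓ f (i + 1) : Subgroup G) : Set G)).index = p ^ k)) := by
      intro i hi
      rcases Nat.lt_or_ge i n₀ with hi' | hge
      · -- below N
        set jF : Fin n₀ := ⟨i, hi'⟩ with hjF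
        haveI hKn : (σ₀ jF.castSucc).Normal := hσ₀.normal _
        haveI hLn : (σ₀ jF.succ).Normal := hσ₀.normal _
        have e1 : f i = σ₀ jF.castSucc ⊓ N := by
          rw [hf_le i hi'.le, hs i hi'.le]
          congr 2
        have e2 : f (i + 1) = σ₀ jF.succ ⊓ N := by
          rw [hf_le (i + 1) hi', hs (i + 1) hi']
          congr 2
        set K := σ₀ jF.castSucc with hKeq
        set L := σ₀ jF.succ with hLeq
        have hKL : K < L := hσ₀.mono (Fin.castSucc_lt_succ (i := jF))
        rw [e1, e2]
        by_cases hcase : L ⊓ N ≤ K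
        · left
          exact le_antisymm (inf_le_inf_right N hKL.le) (le_inf hcase inf_le_right)
        · right
          refine ⟨lt_of_le_of_ne (inf_le_inf_right N hKL.le)
            (fun h => hcase (by rw [← h]; exact inf_le_left)), normal_inf' hKn hN,
            normal_inf' hLn hN, ?_, ?_⟩
          · intro M hM h1 h2
            haveI := hM
            rcases hσ₀.chief jF (K ⊔ M) inferInstance le_sup_left
              (sup_le hKL.le (h2.trans inf_le_left)) with hc | hc
            · left
              have hMK : M ≤ K := le_sup_right.trans hc.le
              exact le_antisymm (le_inf hMK (h2.trans inf_le_right)) h1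
            · right
              refine le_antisymm h2 ?_
              intro x hx
              have hxL : x ∈ (↑(K ⊔ M) : Set G) := by rw [hc]; exact hx.1
              rw [Subgroup.mul_normal] at hxL
              obtain ⟨a, haK, b, hbM, rfl⟩ := hxL
              have haN : a ∈ N := by
                have hb : b ∈ N := (h2 hbM).2
                have hab : a * b ∈ N := hx.2
                simpa using mul_mem hab (inv_mem hb)
              exact mul_mem (h1 ⟨haK, haN⟩) hbM
          · obtain ⟨k, hk⟩ := key jF
            have heq : (H ⊔ K ⊓ N) ⊓ (L ⊓ N) = ((H ⊔ K) ⊓ L) ⊓ N := by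
              apply le_antisymm
              · exact le_inf (le_inf (inf_le_left.trans (sup_le le_sup_left
                  (inf_le_left.trans le_sup_right))) (inf_le_right.trans inf_le_left))
                  (inf_le_right.trans inf_le_right)
              · rintro x ⟨⟨hx1, hx2⟩, hx3⟩
                have hx1' : x ∈ (↑(H ⊔ K) : Set G) := hx1
                rw [Subgroup.mul_normal] at hx1'
                obtain ⟨h', hh, a, haK, rfl⟩ := hx1'
                have haN : a ∈ N := by
                  have hh' : h' ∈ N := hHN hh
                  simpa using mul_mem (inv_mem hh') hx3
                exact ⟨mul_mem (le_sup_left (a := H) (b := K ⊓ N) hh)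
                  (le_sup_right (a := H) (b := K ⊓ N) ⟨haK, haN⟩), ⟨hx2, hx3⟩⟩
            have hdvd := Subgroup.index_dvd_of_le (my_normalizer_le_inf (X := (H ⊔ K) ⊓ L) hN)
            rw [hk] at hdvd
            obtain ⟨k', _, hk'⟩ := (Nat.dvd_prime_pow hp).mp hdvd
            exact ⟨k', by rw [heq]; exact hk'⟩
      · -- above N
        have hi1 : i - n₀ < n₀ := by omega
        set jF : Fin n₀ := ⟨i - n₀, hi1⟩ with hjF
        haveI hKn : (σ₀ jF.castSucc).Normal := hσ₀.normal _
        haveI hLn : (σ₀ jF.succ).Normal := hσ₀.normal _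
        have e1 : f i = N ⊔ σ₀ jF.castSucc := by
          rw [hfn' i hge, hs (i - n₀) (by omega)]
          congr 2
        have e2 : f (i + 1) = N ⊔ σ₀ jF.succ := by
          rw [hf_gt (i + 1) (by omega), hs (i + 1 - n₀) (by omega)]
          congr 2
          simp only [Fin.ext_iff, Fin.val_succ, hjF, Fin.val_mk]
          omega
        set K := σ₀ jF.castSucc with hKeq
        set L := σ₀ jF.succ with hLeq
        have hKL : K < L := hσ₀.mono (Fin.castSucc_lt_succ (i := jF))
        rw [e1, e2]
        by_cases hcase : L ≤ N ⊔ K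
        · left
          exact le_antisymm (sup_le_sup_left hKL.le N) (sup_le le_sup_left hcase)
        · right
          refine ⟨lt_of_le_of_ne (sup_le_sup_left hKL.le N)
            (fun h => hcase (by rw [h]; exact le_sup_right)), inferInstance,
            inferInstance, ?_, ?_⟩
          · intro M hM h1 h2
            haveI := hM
            rcases hσ₀.chief jF (M ⊓ L) (normal_inf' hM hLn)
              (le_inf (le_sup_right.trans h1) hKL.le) inf_le_right with hc | hc
            · left
              refine le_antisymm ?_ h1
              intro x hx
              have hx2 : x ∈ (↑(N ⊔ L) : Set G) := h2 hx
              rw [Subgroup.normal_mul] at hx2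
              obtain ⟨nn, hnn, l, hl, rfl⟩ := hx2
              have hnM : nn ∈ M := h1 (le_sup_left (a := N) (b := K) hnn)
              have hlM : l ∈ M := by
                simpa using mul_mem (inv_mem hnM) hx
              have hlK : l ∈ K := by
                have : l ∈ M ⊓ L := ⟨hlM, hl⟩
                rw [hc] at this
                exact this
              exact mul_mem (le_sup_left (a := N) (b := K) hnn)
                (le_sup_right (a := N) (b := K) hlK)
            · right
              have hLM : L ≤ M := le_of_eq_of_le hc.symm inf_le_left
              exact le_antisymm h2 (sup_le (le_sup_left.trans h1) hLM)
          · refine ⟨0, ?_⟩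
            have hH' : (H ⊔ (N ⊔ K)) ⊓ (N ⊔ L) = N ⊔ K := by
              rw [sup_eq_right.mpr (hHN.trans le_sup_left)]
              exact inf_eq_left.mpr (sup_le_sup_left hKL.le N)
            rw [hH', pow_zero, Subgroup.normalizer_eq_top_iff.mpr inferInstance,
              Subgroup.index_top]
    obtain ⟨n, σ, h0, hlast, hmono, hQ, j, hj⟩ := my_chain_dedup
      (fun K L => K.Normal ∧ L.Normal ∧
        (∀ M : Subgroup G, M.Normal → K ≤ M → M ≤ L → M = K ∨ M = L) ∧
        ∃ k : ℕ, (Subgroup.normalizer (((H ⊔ K) ⊓ L : Subgroup G) : Set G)).index = p ^ k) (2 * n₀) f hstep n₀ (by omega)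
    refine ⟨n, σ, ⟨by rw [h0, hf0], by rw [hlast, hftop], hmono, ?_,
      fun i M hM hKM hML => (hQ i).2.2.1 M hM hKM hML⟩, j, by rw [hj, hfn],
      fun i => (hQ i).2.2.2⟩
    intro i
    rcases Fin.eq_castSucc_or_eq_last i with ⟨i', rfl⟩ | rfl
    · exact (hQ i').1
    · rw [hlast, hftop]
      infer_instance
end Omega
end

section
/- Let p be an odd prime, P a nontrivial finite p-group, and D a Thompson critical subgroup of P. Then Ω_1(D) has exponent p. -/
lemma aux_central_pow {G : Type*} [Group G] {z : G}
    (hz : ∀ g : G, z * g = g * z) : ∀ (m : ℕ) (g : G), z ^ m * g = g * z ^ m := by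
  intro m
  induction m with
  | zero => simp
  | succ k ihk => intro g; rw [pow_succ, mul_assoc, hz g, ← mul_assoc, ihk g, mul_assoc]

lemma aux_pow_swap {G : Type*} [Group G] {x y z : G}
    (hz : ∀ g : G, z * g = g * z) (hyx : y * x = x * y * z) :
    ∀ n : ℕ, y ^ n * x = x * y ^ n * z ^ n := by
  intro n
  induction n with
  | zero => simp
  | succ n ih =>
    calc y ^ (n+1) * x = y ^ n * (y * x) := by rw [pow_succ]; group
    _ = y ^ n * x * (y * z) := by rw [hyx]; group
    _ = x * y ^ n * z ^ n * (y * z) := by rw [ih]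
    _ = x * y ^ n * (z ^ n * y) * z := by group
    _ = x * y ^ n * (y * z ^ n) * z := by rw [aux_central_pow hz n y]
    _ = x * y ^ (n+1) * z ^ (n+1) := by rw [pow_succ, pow_succ]; group

lemma aux_mul_pow {G : Type*} [Group G] {x y z : G}
    (hz : ∀ g : G, z * g = g * z) (hyx : y * x = x * y * z) :
    ∀ n : ℕ, (x * y) ^ n = x ^ n * y ^ n * z ^ n.choose 2 := by
  intro n
  induction n with
  | zero => simp
  | succ n ih =>
    calc (x * y) ^ (n+1) = (x * y) ^ n * (x * y) := pow_succ _ _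
    _ = x ^ n * y ^ n * z ^ n.choose 2 * (x * y) := by rw [ih]
    _ = x ^ n * (y ^ n * x) * (z ^ n.choose 2 * y) := by
        have h : z ^ n.choose 2 * x = x * z ^ n.choose 2 := aux_central_pow hz _ x
        calc x ^ n * y ^ n * z ^ n.choose 2 * (x * y)
            = x ^ n * y ^ n * (z ^ n.choose 2 * x) * y := by group
          _ = x ^ n * y ^ n * (x * z ^ n.choose 2) * y := by rw [h]
          _ = x ^ n * (y ^ n * x) * (z ^ n.choose 2 * y) := by group
    _ = x ^ n * (x * y ^ n * z ^ n) * (y * z ^ n.choose 2) := by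
        rw [aux_pow_swap hz hyx n, aux_central_pow hz (n.choose 2) y]
    _ = x ^ (n+1) * y ^ (n+1) * (z ^ n * z ^ n.choose 2) := by
        rw [pow_succ x, pow_succ y]
        have h : z ^ n * y = y * z ^ n := aux_central_pow hz n y
        calc x ^ n * (x * y ^ n * z ^ n) * (y * z ^ n.choose 2)
            = x ^ n * x * y ^ n * (z ^ n * y) * z ^ n.choose 2 := by group
          _ = x ^ n * x * y ^ n * (y * z ^ n) * z ^ n.choose 2 := by rw [h]
          _ = x ^ n * x * (y ^ n * y) * (z ^ n * z ^ n.choose 2) := by group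
    _ = x ^ (n+1) * y ^ (n+1) * z ^ (n+1).choose 2 := by
        rw [← pow_add, Nat.choose_succ_succ, Nat.choose_one_right, Nat.add_comm]

open scoped commutatorElement

lemma pow_p_closed {G : Type*} [Group G] {p : ℕ} (hp : p.Prime) (hp2 : p ≠ 2)
    (hc : ∀ x y g : G, ⁅x, y⁆ * g = g * ⁅x, y⁆)
    {x y : G} (hx : x ^ p = 1) (hy : y ^ p = 1) : (x * y) ^ p = 1 := by
  set z := ⁅y⁻¹, x⁻¹⁆ with hzdef
  have hz : ∀ g : G, z * g = g * z := hc y⁻¹ x⁻¹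
  have hyx : y * x = x * y * z := by
    rw [hzdef]; simp only [commutatorElement_def]; group
  have hzp : z ^ p = 1 := by
    have := aux_pow_swap hz hyx p
    rw [hy] at this
    simpa using this.symm
  have h2 : 2 ∣ p - 1 := by
    have := Nat.odd_iff.mp (hp.odd_of_ne_two hp2)
    omega
  have hcp : p.choose 2 = p * ((p - 1) / 2) := by
    rw [Nat.choose_two_right, Nat.mul_div_assoc _ h2]
  rw [aux_mul_pow hz hyx p, hx, hy, hcp, pow_mul, hzp, one_pow]
  simp

/-- If `p` is an odd prime, `P` a nontrivial finite `p`-group and `D` a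
Thompson critical subgroup of `P`, then `Ω_1(D)` has exponent `p`. -/
theorem thm_omega1_exponent_odd
    {p : ℕ} (hp : p.Prime) (hp2 : p ≠ 2)
    (P : Type*) [Group P] [Finite P] [Nontrivial P] (hP : IsPGroup p P)
    (D : Subgroup P) (hD : IsThompsonCritical D) :
    Monoid.exponent ↥(omega p 1 ↥D) = p := by
  obtain ⟨hchar, hfrat, hcomm, hcent⟩ := hD
  -- commutators in D are central in D
  have hc : ∀ x y g : ↥D, ⁅x, y⁆ * g = g * ⁅x, y⁆ := by
    intro x y g
    have h1 : ((⁅x, y⁆ : ↥D) : P) ∈ Subgroup.centralizer (D : Set P) := by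
      have hm : ⁅(x : P), (y : P)⁆ ∈ ⁅(⊤ : Subgroup P), D⁆ :=
        Subgroup.commutator_mem_commutator (Subgroup.mem_top _) y.2
      exact (hcomm hm).2
    have h2 := (Subgroup.mem_centralizer_iff.mp h1) (g : P) g.2
    exact Subtype.ext h2.symm
  -- the subgroup of elements of order dividing p
  let H : Subgroup ↥D :=
  { carrier := {x | x ^ p = 1}
    one_mem' := one_pow p
    mul_mem' := fun ha hb => pow_p_closed hp hp2 hc ha hb
    inv_mem' := fun ha => by
      show _ ^ p = 1
      rw [inv_pow, ha, inv_one] }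
  have hle : omega p 1 ↥D ≤ H := by
    apply (Subgroup.closure_le H).mpr
    intro x hx
    exact (by simpa using hx : x ^ p = 1)
  have hpow : ∀ g : ↥(omega p 1 ↥D), g ^ p = 1 := by
    intro g
    have := hle g.2
    exact Subtype.ext (by simp only [SubmonoidClass.coe_pow, OneMemClass.coe_one]; exact this)
  have hdvd : Monoid.exponent ↥(omega p 1 ↥D) ∣ p :=
    Monoid.exponent_dvd_of_forall_pow_eq_one hpow
  haveI : Fact p.Prime := ⟨hp⟩
  -- D is nontrivial
  have hDnt : Nontrivial ↥D := by
    obtain ⟨z, hz, hz1⟩ := (Subgroup.nontrivial_iff_exists_ne_one _).mp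
      (hP.center_nontrivial)
    refine ⟨⟨z, hcent ?_⟩, 1, by simpa using hz1⟩
    exact fun d hd => ((Subgroup.mem_center_iff.mp hz) d).symm ▸
      (Subgroup.mem_center_iff.mp hz d)
  -- an element of order p in D
  have hDp : IsPGroup p ↥D := hP.to_subgroup D
  have hcard : p ∣ Nat.card ↥D := by
    obtain ⟨n, hn⟩ := IsPGroup.iff_card.mp hDp
    rcases n with _ | n
    · have h1 := (Finite.one_lt_card_iff_nontrivial (α := ↥D)).mpr hDnt
      rw [hn, pow_zero] at h1
      omega
    · exact hn ▸ dvd_pow_self p n.succ_ne_zero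
  obtain ⟨g, hg⟩ := exists_prime_orderOf_dvd_card' p hcard
  have hgmem : g ∈ omega p 1 ↥D := by
    apply Subgroup.subset_closure
    show g ^ p ^ 1 = 1
    rw [pow_one, ← hg, pow_orderOf_eq_one]
  have horder : orderOf (⟨g, hgmem⟩ : ↥(omega p 1 ↥D)) = p := by
    rw [Subgroup.orderOf_mk g hgmem, hg]
  have hpd : p ∣ Monoid.exponent ↥(omega p 1 ↥D) := by
    have := Monoid.order_dvd_exponent (⟨g, hgmem⟩ : ↥(omega p 1 ↥D))
    rwa [horder] at this
  exact Nat.dvd_antisymm hdvd hpd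
end

section
/- Let P be a nontrivial finite 2-group and D a Thompson critical subgroup of P. Then the exponent of Ω_2(D) is at most 4. -/
-- auxiliary lemma: in a finite 2-group, squares lie in every maximal subgroup
lemma my_sq_mem_coatom {G : Type*} [Group G] [Finite G] (hp : IsPGroup 2 G)
    {M : Subgroup G} (hM : IsCoatom M) (x : G) : x ^ 2 ∈ M := by
  haveI : Fact (Nat.Prime 2) := ⟨Nat.prime_two⟩
  haveI : Group.IsNilpotent G := hp.isNilpotent
  haveI hMn : M.Normal := Subgroup.NormalizerCondition.normal_of_coatom M
    normalizerCondition_of_isNilpotent hM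
  set f := QuotientGroup.mk' M with hf
  set y := f x with hy
  set N := (Subgroup.zpowers (y ^ 2)).comap f with hN
  have hMN : M ≤ N := by
    intro m hm
    have : f m = 1 := (QuotientGroup.eq_one_iff m).mpr hm
    rw [hN, Subgroup.mem_comap, this]; exact Subgroup.one_mem _
  rcases hMN.lt_or_eq with hlt | heq
  · have hNtop : N = ⊤ := hM.2 N hlt
    have hyz : y ∈ Subgroup.zpowers (y ^ 2) := by
      have hx : x ∈ N := by rw [hNtop]; trivial
      simpa [hN, Subgroup.mem_comap] using hx
    obtain ⟨n, hn⟩ := hyz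
    have hz : y ^ (2 * n - 1 : ℤ) = 1 := by
      have h2 : (y ^ 2) ^ n = y := hn
      rw [← zpow_natCast, ← zpow_mul, Nat.cast_ofNat] at h2
      rw [zpow_sub, h2]
      simp
    have hdvd : (orderOf y : ℤ) ∣ (2 * n - 1) := orderOf_dvd_iff_zpow_eq_one.mpr hz
    obtain ⟨k, hk⟩ := IsPGroup.iff_orderOf.mp (hp.to_quotient M) y
    have hy1 : y = 1 := by
      rcases Nat.eq_zero_or_pos k with rfl | hkpos
      · simpa [hk] using orderOf_eq_one_iff.mp (by simpa using hk)
      · exfalso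
        have h2 : (2 : ℤ) ∣ (2 * n - 1) := by
          refine dvd_trans ?_ hdvd
          rw [hk]
          exact_mod_cast dvd_pow_self 2 hkpos.ne'
        omega
    have hx1 : x ∈ M := (QuotientGroup.eq_one_iff x).mp hy1
    exact M.pow_mem hx1 2
  · have hx2 : x ^ 2 ∈ N := by
      simp only [hN, Subgroup.mem_comap, map_pow]
      exact Subgroup.mem_zpowers _
    rwa [← heq] at hx2

lemma my_sq_mem_frattini {G : Type*} [Group G] [Finite G] (hp : IsPGroup 2 G) (x : G) :
    x ^ 2 ∈ frattini G := by
  have : ∀ M ∈ {H : Subgroup G | IsCoatom H}, x ^ 2 ∈ M := fun M hM => my_sq_mem_coatom hp hM x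
  simpa [frattini, Order.radical, Subgroup.mem_iInf] using this


lemma my_key {G : Type*} [Group G] {a b : G}
    (ha2 : ∀ z : G, a ^ 2 * z = z * a ^ 2) (hb2 : ∀ z : G, b ^ 2 * z = z * b ^ 2)
    (hc : ∀ z : G, (a * b * a⁻¹ * b⁻¹) * z = z * (a * b * a⁻¹ * b⁻¹))
    (ha : a ^ 4 = 1) (hb : b ^ 4 = 1) : (a * b) ^ 4 = 1 := by
  set c := a * b * a⁻¹ * b⁻¹ with hcdef
  have hcinv : ∀ z : G, z * c⁻¹ = c⁻¹ * z := by
    intro z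
    calc z * c⁻¹ = c⁻¹ * (c * z) * c⁻¹ := by group
      _ = c⁻¹ * (z * c) * c⁻¹ := by rw [hc z]
      _ = c⁻¹ * z := by group
  have hc2 : c * c = 1 := by
    calc c * c = (c * a) * (b * a⁻¹ * b⁻¹) := by rw [hcdef]; group
      _ = (a * c) * (b * a⁻¹ * b⁻¹) := by rw [hc a]
      _ = (a ^ 2 * b) * (a⁻¹ * a⁻¹ * b⁻¹) := by rw [hcdef, pow_two]; group
      _ = (b * a ^ 2) * (a⁻¹ * a⁻¹ * b⁻¹) := by rw [ha2 b]
      _ = 1 := by group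
  have hba : b * a = c⁻¹ * (a * b) := by rw [hcdef]; group
  have h4 : (a * b) ^ 2 = c⁻¹ * (a ^ 2 * b ^ 2) := by
    calc (a * b) ^ 2 = a * (b * a) * b := by rw [pow_two]; group
      _ = a * (c⁻¹ * (a * b)) * b := by rw [hba]
      _ = (a * c⁻¹) * (a * b * b) := by group
      _ = (c⁻¹ * a) * (a * b * b) := by rw [hcinv a]
      _ = c⁻¹ * (a ^ 2 * b ^ 2) := by rw [pow_two a, pow_two b]; group
  calc (a * b) ^ 4 = (a * b) ^ 2 * (a * b) ^ 2 := by rw [← pow_add]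
    _ = (c⁻¹ * (a ^ 2 * b ^ 2)) * (c⁻¹ * (a ^ 2 * b ^ 2)) := by rw [h4]
    _ = c⁻¹ * ((a ^ 2 * b ^ 2) * c⁻¹) * (a ^ 2 * b ^ 2) := by group
    _ = c⁻¹ * (c⁻¹ * (a ^ 2 * b ^ 2)) * (a ^ 2 * b ^ 2) := by rw [hcinv (a ^ 2 * b ^ 2)]
    _ = (c * c)⁻¹ * (a ^ 2 * (b ^ 2 * a ^ 2) * b ^ 2) := by group
    _ = (c * c)⁻¹ * (a ^ 2 * (a ^ 2 * b ^ 2) * b ^ 2) := by rw [hb2 (a ^ 2)]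
    _ = (c * c)⁻¹ * (a ^ 4 * b ^ 4) := by rw [show (4:ℕ)=2+2 from rfl, pow_add a, pow_add b]; group
    _ = 1 := by rw [hc2, ha, hb]; group

/-- If `P` is a nontrivial finite `2`-group and `D` a Thompson critical
subgroup of `P`, then the exponent of `Ω_2(D)` is at most `4`. -/
theorem thm_omega2_exponent
    (P : Type*) [Group P] [Finite P] [Nontrivial P] (hP : IsPGroup 2 P)
    (D : Subgroup P) (hD : IsThompsonCritical D) :
    Monoid.exponent ↥(omega 2 2 ↥D) ≤ 4 := by
  have hD2 : IsPGroup 2 ↥D := hP.to_subgroup D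
  have hsq : ∀ x z : ↥D, x ^ 2 * z = z * x ^ 2 := by
    intro x z
    have hfr : x ^ 2 ∈ frattini ↥D := my_sq_mem_frattini hD2 x
    have hmem : (x : P) ^ 2 ∈ D ⊓ Subgroup.centralizer (D : Set P) := by
      apply hD.2.1
      exact ⟨x ^ 2, hfr, by simp⟩
    have hcent := (Subgroup.mem_inf.mp hmem).2
    rw [Subgroup.mem_centralizer_iff] at hcent
    exact Subtype.ext (by push_cast; exact (hcent z z.2).symm)
  have hcom : ∀ x y z : ↥D, (x * y * x⁻¹ * y⁻¹) * z = z * (x * y * x⁻¹ * y⁻¹) := by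
    intro x y z
    open scoped commutatorElement in
    have hmem : ⁅(x : P), (y : P)⁆ ∈ ⁅(⊤ : Subgroup P), D⁆ :=
      Subgroup.commutator_mem_commutator (Subgroup.mem_top _) y.2
    have hcent := (Subgroup.mem_inf.mp (hD.2.2.1 hmem)).2
    rw [Subgroup.mem_centralizer_iff] at hcent
    have h := (hcent z z.2).symm
    rw [commutatorElement_def] at h
    exact Subtype.ext (by push_cast; simpa [mul_assoc] using h)
  let K : Subgroup ↥D :=
    { carrier := {g : ↥D | g ^ 4 = 1}
      one_mem' := by simp
      mul_mem' := fun {a b} ha hb => my_key (hsq a) (hsq b) (hcom a b) ha hb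
      inv_mem' := fun {a} ha => by
        show a⁻¹ ^ 4 = 1
        rw [inv_pow, ha, inv_one] }
  have hle : omega 2 2 ↥D ≤ K := by
    rw [omega]
    apply (Subgroup.closure_le K).mpr
    intro g hg
    show g ^ 4 = 1
    simpa using hg
  have hpow : ∀ g : ↥(omega 2 2 ↥D), g ^ 4 = 1 := by
    intro g
    have h4 : (g : ↥D) ^ 4 = 1 := hle g.2
    exact Subtype.ext (by push_cast; exact h4)
  exact Nat.le_of_dvd (by norm_num) (Monoid.exponent_dvd_of_forall_pow_eq_one hpow)
end
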